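/- arXiv:math/0607420 — 8 statements merged into one kernel-verified Lean document; each statement's English description precedes it below -/
import Mathlib

section
/- Let A be a finite alphabet with an antireflexive symmetric relation θ ⊆ A × A, and let M(A,θ) be the free partially commutative monoid (trace monoid). For any subalphabet B ⊆ A, the set M = {t ∈ M(A,θ) : no initial letter of t lies in B} is a submonoid of M(A,θ), and every element of M(A,θ) factors uniquely as a product w·t with w ∈ M(B,θ_B) and t ∈ M. In other words, M(B,θ_B) is the left factor of a bisection of M(A,θ). -/
namespace PCM

variable {A : Type*}

/-- Elementary commutation relation on words. -/
def TraceRel (θ : A → A → Prop) : FreeMonoid A → FreeMonoid A → Prop :=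
  fun x y => ∃ a b, θ a b ∧ x = FreeMonoid.of a * FreeMonoid.of b ∧
    y = FreeMonoid.of b * FreeMonoid.of a

/-- The congruence generated by the commutations. -/
def traceCon (θ : A → A → Prop) : Con (FreeMonoid A) := conGen (TraceRel θ)

/-- The free partially commutative (trace) monoid `M(A,θ)`. -/
abbrev Trace (A : Type*) (θ : A → A → Prop) := (traceCon θ).Quotient

/-- Canonical projection from words to traces. -/
def trMk (θ : A → A → Prop) : FreeMonoid A →* Trace A θ := (traceCon θ).mk'

/-- The trace of a single letter. -/
def trOf (θ : A → A → Prop) (a : A) : Trace A θ := trMk θ (FreeMonoid.of a)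

/-- `IA t` : the set of possible initial letters of a trace. -/
def IA (θ : A → A → Prop) (t : Trace A θ) : Set A := {a | ∃ w, t = trOf θ a * w}

/-- The alphabet of a trace. -/
def Alph (θ : A → A → Prop) (t : Trace A θ) : Set A :=
  {a | ∃ l : List A, trMk θ (FreeMonoid.ofList l) = t ∧ a ∈ l}

/-- The submonoid `M(B,θ_B)` generated by a subalphabet. -/
def subTr (θ : A → A → Prop) (B : Set A) : Submonoid (Trace A θ) :=
  Submonoid.closure (trOf θ '' B)

/-- `β_Z(B)` where `Z = A - B`. -/
def beta (θ : A → A → Prop) (B : Set A) : Set (Trace A θ) :=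
  {t | ∃ z, z ∉ B ∧ ∃ w ∈ subTr θ B, t = trOf θ z * w ∧ IA θ t = {z}}

/-- The induced independence relation `θ_X` on a set of traces. -/
def thetaX (θ : A → A → Prop) (X : Set (Trace A θ)) (x y : X) : Prop :=
  ∀ a ∈ Alph θ (x : Trace A θ), ∀ b ∈ Alph θ (y : Trace A θ), θ a b

/-- `X` is a partially commutative code : the canonical morphism from
`M(X,θ_X)` is injective. -/
def IsPCCode (θ : A → A → Prop) (X : Set (Trace A θ)) : Prop :=
  ∃ f : Trace X (thetaX θ X) →* Trace A θ,
    (∀ x : X, f (trOf (thetaX θ X) x) = (x : Trace A θ)) ∧ Function.Injective f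

/-- Dependence relation (edges of the dependence graph). -/
def dep (θ : A → A → Prop) (a b : A) : Prop := a ≠ b ∧ ¬ θ a b

/-- A path `z - b₁ - ⋯ - bₙ - z'` in the dependence graph with inner vertices in `B`. -/
def DepPathB (θ : A → A → Prop) (B : Set A) (z z' : A) : Prop :=
  ∃ l : List A, (∀ b ∈ l, b ∈ B) ∧ List.Chain (dep θ) z (l ++ [z'])

/-- `B` is a transitively factorizing subalphabet. -/
def IsTFSA (θ : A → A → Prop) (B : Set A) : Prop :=
  ∀ z z', z ∉ B → z' ∉ B → θ z z' → ¬ DepPathB θ B z z'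

end PCM

namespace PCMProof
open PCM FreeMonoid

variable {A : Type*} (θ : A → A → Prop) (B : Set A)

lemma trMk_eq_iff (x y : FreeMonoid A) : trMk θ x = trMk θ y ↔ traceCon θ x y :=
  Con.eq _

lemma trMk_swap {a b : A} (h : θ a b) :
    trMk θ (of a * of b) = trMk θ (of b * of a) :=
  (trMk_eq_iff θ _ _).mpr (ConGen.Rel.of _ _ ⟨a, b, h, rfl, rfl⟩)

/-- The "same letters up to permutation" congruence. -/
def permCon : Con (FreeMonoid A) where
  r x y := List.Perm (toList x) (toList y)
  iseqv := ⟨fun _ => List.Perm.refl _, List.Perm.symm, List.Perm.trans⟩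
  mul' h1 h2 := by simpa [toList_mul] using h1.append h2

lemma trMk_perm {x y : FreeMonoid A} (h : trMk θ x = trMk θ y) :
    List.Perm (toList x) (toList y) := by
  refine Con.le_def.mp ((Con.conGen_le (c := permCon)).mpr ?_) ((trMk_eq_iff θ x y).mp h)
  rintro x y ⟨p, q, hpq, rfl, rfl⟩
  simpa [permCon, toList_mul] using List.Perm.swap q p []

lemma trace_rep (t : Trace A θ) : ∃ l : List A, trMk θ (ofList l) = t := by
  obtain ⟨x, hx⟩ := Con.mk'_surjective t
  exact ⟨toList x, by rw [ofList_toList]; exact hx⟩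

lemma mul_trOf_ne_one (a : A) (v : Trace A θ) : trOf θ a * v ≠ 1 := by
  obtain ⟨x, rfl⟩ := trace_rep θ v
  intro h
  have h2 : trMk θ (ofList (a :: x)) = trMk θ 1 := by
    rw [ofList_cons, map_mul, map_one]; exact h
  have := trMk_perm θ h2
  simp [toList_ofList, toList_one] at this

open Classical in
/-- One step of the extraction algorithm. -/
noncomputable def step (σ : FreeMonoid A × FreeMonoid A) (a : A) :
    FreeMonoid A × FreeMonoid A :=
  if a ∈ B ∧ ∀ c ∈ toList σ.2, θ a c then (σ.1 * of a, σ.2) else (σ.1, σ.2 * of a)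

lemma step_pos (w u : FreeMonoid A) {a : A}
    (h : a ∈ B ∧ ∀ c ∈ toList u, θ a c) :
    step θ B (w, u) a = (w * of a, u) := if_pos h

lemma step_neg (w u : FreeMonoid A) {a : A}
    (h : ¬ (a ∈ B ∧ ∀ c ∈ toList u, θ a c)) :
    step θ B (w, u) a = (w, u * of a) := if_neg h

/-- Run of the extraction algorithm. -/
noncomputable def runF (σ : FreeMonoid A × FreeMonoid A) (l : List A) :
    FreeMonoid A × FreeMonoid A :=
  l.foldl (step θ B) σ

lemma runF_nil (σ : FreeMonoid A × FreeMonoid A) : runF θ B σ [] = σ := rfl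

lemma runF_cons (σ : FreeMonoid A × FreeMonoid A) (a : A) (l : List A) :
    runF θ B σ (a :: l) = runF θ B (step θ B σ a) l := rfl

lemma runF_append (σ : FreeMonoid A × FreeMonoid A) (l l' : List A) :
    runF θ B σ (l ++ l') = runF θ B (runF θ B σ l) l' :=
  List.foldl_append ..

/-- Equivalence of algorithm states. -/
def Eqv (σ σ' : FreeMonoid A × FreeMonoid A) : Prop :=
  trMk θ σ.1 = trMk θ σ'.1 ∧ trMk θ σ.2 = trMk θ σ'.2

lemma eqv_refl {σ : FreeMonoid A × FreeMonoid A} : Eqv θ σ σ := ⟨Eq.refl _, Eq.refl _⟩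

lemma Eqv.symm' {σ σ' : FreeMonoid A × FreeMonoid A} (h : Eqv θ σ σ') : Eqv θ σ' σ :=
  ⟨h.1.symm, h.2.symm⟩

lemma Eqv.trans' {σ σ' σ'' : FreeMonoid A × FreeMonoid A}
    (h : Eqv θ σ σ') (h' : Eqv θ σ' σ'') : Eqv θ σ σ'' :=
  ⟨h.1.trans h'.1, h.2.trans h'.2⟩

lemma eqv_step {σ σ' : FreeMonoid A × FreeMonoid A} (h : Eqv θ σ σ') (a : A) :
    Eqv θ (step θ B σ a) (step θ B σ' a) := by
  obtain ⟨w, u⟩ := σ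
  obtain ⟨w', u'⟩ := σ'
  have hperm := trMk_perm θ h.2
  by_cases hc : a ∈ B ∧ ∀ c ∈ toList u, θ a c
  · have hc' : a ∈ B ∧ ∀ c ∈ toList u', θ a c :=
      ⟨hc.1, fun c hm => hc.2 c (hperm.mem_iff.mpr hm)⟩
    rw [step_pos θ B w u hc, step_pos θ B w' u' hc']
    exact ⟨by simpa [map_mul] using congrArg (· * trMk θ (of a)) h.1, h.2⟩
  · have hc' : ¬ (a ∈ B ∧ ∀ c ∈ toList u', θ a c) := fun hh =>
      hc ⟨hh.1, fun c hm => hh.2 c (hperm.mem_iff.mp hm)⟩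
    rw [step_neg θ B w u hc, step_neg θ B w' u' hc']
    exact ⟨h.1, by simpa [map_mul] using congrArg (· * trMk θ (of a)) h.2⟩

lemma eqv_runF {σ σ' : FreeMonoid A × FreeMonoid A} (h : Eqv θ σ σ') (l : List A) :
    Eqv θ (runF θ B σ l) (runF θ B σ' l) := by
  induction l generalizing σ σ' with
  | nil => exact h
  | cons a l ih => exact ih (eqv_step θ B h a)

/-- The congruence expressing well-definedness of the algorithm. -/
def mainCon : Con (FreeMonoid A) where
  r x y := ∀ σ σ', Eqv θ σ σ' → Eqv θ (runF θ B σ (toList x)) (runF θ B σ' (toList y))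
  iseqv := by
    refine ⟨fun x σ σ' h => eqv_runF θ B h _, fun {x y} h σ σ' he => ?_,
      fun {x y z} h1 h2 σ σ' he => ?_⟩
    · exact Eqv.symm' θ (h σ' σ (Eqv.symm' θ he))
    · exact Eqv.trans' θ (h1 σ σ (eqv_refl θ)) (h2 σ σ' he)
  mul' := by
    intro w x y z h1 h2 σ σ' he
    rw [toList_mul, toList_mul, runF_append, runF_append]
    exact h2 _ _ (h1 σ σ' he)

lemma traceCon_le_mainCon (hsymm : ∀ a b, θ a b → θ b a) :
    traceCon θ ≤ mainCon θ B := by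
  apply Con.conGen_le.mpr
  rintro x y ⟨a, b, hab, rfl, rfl⟩ σ σ' he
  obtain ⟨w, u⟩ := σ
  obtain ⟨w', u'⟩ := σ'
  have hperm := trMk_perm θ he.2
  have hsw : trMk θ (of a) * trMk θ (of b) = trMk θ (of b) * trMk θ (of a) := by
    have := trMk_swap θ hab
    simpa [map_mul] using this
  show Eqv θ (step θ B (step θ B (w, u) a) b) (step θ B (step θ B (w', u') b) a)
  by_cases hPa : a ∈ B ∧ ∀ c ∈ toList u, θ a c <;>
    by_cases hPb : b ∈ B ∧ ∀ c ∈ toList u, θ b c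
  · -- both extractable
    have hPa' : a ∈ B ∧ ∀ c ∈ toList u', θ a c :=
      ⟨hPa.1, fun c hm => hPa.2 c (hperm.mem_iff.mpr hm)⟩
    have hPb' : b ∈ B ∧ ∀ c ∈ toList u', θ b c :=
      ⟨hPb.1, fun c hm => hPb.2 c (hperm.mem_iff.mpr hm)⟩
    rw [step_pos θ B w u hPa, step_pos θ B w' u' hPb',
      step_pos θ B (w * of a) u hPb, step_pos θ B (w' * of b) u' hPa']
    refine ⟨?_, he.2⟩
    show trMk θ (w * of a * of b) = trMk θ (w' * of b * of a)
    simp only [map_mul, mul_assoc, he.1]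
    rw [hsw]
  · -- a extractable, b not
    have hPa' : a ∈ B ∧ ∀ c ∈ toList u', θ a c :=
      ⟨hPa.1, fun c hm => hPa.2 c (hperm.mem_iff.mpr hm)⟩
    have hPb' : ¬ (b ∈ B ∧ ∀ c ∈ toList u', θ b c) := fun hh =>
      hPb ⟨hh.1, fun c hm => hh.2 c (hperm.mem_iff.mp hm)⟩
    rw [step_pos θ B w u hPa, step_neg θ B w' u' hPb']
    have h2' : a ∈ B ∧ ∀ c ∈ toList (u' * of b), θ a c := by
      refine ⟨hPa.1, ?_⟩
      intro c hm
      rw [toList_mul, toList_of] at hm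
      rcases List.mem_append.mp hm with hm | hm
      · exact hPa.2 c (hperm.mem_iff.mpr hm)
      · obtain rfl : c = b := List.mem_singleton.mp hm
        exact hab
    rw [step_neg θ B (w * of a) u hPb, step_pos θ B w' (u' * of b) h2']
    exact ⟨by simpa [map_mul] using congrArg (· * trMk θ (of a)) he.1,
      by simpa [map_mul] using congrArg (· * trMk θ (of b)) he.2⟩
  · -- b extractable, a not
    have hPa' : ¬ (a ∈ B ∧ ∀ c ∈ toList u', θ a c) := fun hh =>
      hPa ⟨hh.1, fun c hm => hh.2 c (hperm.mem_iff.mp hm)⟩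
    have hPb' : b ∈ B ∧ ∀ c ∈ toList u', θ b c :=
      ⟨hPb.1, fun c hm => hPb.2 c (hperm.mem_iff.mpr hm)⟩
    rw [step_neg θ B w u hPa, step_pos θ B w' u' hPb']
    have h1' : b ∈ B ∧ ∀ c ∈ toList (u * of a), θ b c := by
      refine ⟨hPb.1, ?_⟩
      intro c hm
      rw [toList_mul, toList_of] at hm
      rcases List.mem_append.mp hm with hm | hm
      · exact hPb.2 c hm
      · obtain rfl : c = a := List.mem_singleton.mp hm
        exact hsymm _ _ hab
    rw [step_pos θ B w (u * of a) h1', step_neg θ B (w' * of b) u' hPa']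
    exact ⟨by simpa [map_mul] using congrArg (· * trMk θ (of b)) he.1,
      by simpa [map_mul] using congrArg (· * trMk θ (of a)) he.2⟩
  · -- neither extractable
    have hPa' : ¬ (a ∈ B ∧ ∀ c ∈ toList u', θ a c) := fun hh =>
      hPa ⟨hh.1, fun c hm => hh.2 c (hperm.mem_iff.mp hm)⟩
    have hPb' : ¬ (b ∈ B ∧ ∀ c ∈ toList u', θ b c) := fun hh =>
      hPb ⟨hh.1, fun c hm => hh.2 c (hperm.mem_iff.mp hm)⟩
    rw [step_neg θ B w u hPa, step_neg θ B w' u' hPb']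
    have h1' : ¬ (b ∈ B ∧ ∀ c ∈ toList (u * of a), θ b c) := by
      intro hh
      refine hPb ⟨hh.1, fun c hm => hh.2 c ?_⟩
      rw [toList_mul, toList_of]
      exact List.mem_append.mpr (Or.inl hm)
    have h2' : ¬ (a ∈ B ∧ ∀ c ∈ toList (u' * of b), θ a c) := by
      intro hh
      refine hPa ⟨hh.1, fun c hm => hh.2 c ?_⟩
      rw [toList_mul, toList_of]
      exact List.mem_append.mpr (Or.inl (hperm.mem_iff.mp hm))
    rw [step_neg θ B w (u * of a) h1', step_neg θ B w' (u' * of b) h2']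
    refine ⟨he.1, ?_⟩
    show trMk θ (u * of a * of b) = trMk θ (u' * of b * of a)
    simp only [map_mul, mul_assoc, he.2]
    rw [hsw]

lemma runF_eqv (hsymm : ∀ a b, θ a b → θ b a) {x y : FreeMonoid A}
    (h : trMk θ x = trMk θ y) :
    Eqv θ (runF θ B (1, 1) (toList x)) (runF θ B (1, 1) (toList y)) :=
  Con.le_def.mp (traceCon_le_mainCon θ B hsymm) ((trMk_eq_iff θ x y).mp h)
    (1, 1) (1, 1) (eqv_refl θ)

lemma runF_fst (l : List A) : ∀ w u : FreeMonoid A,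
    ∃ r : List A, (∀ c ∈ r, c ∈ B) ∧ (runF θ B (w, u) l).1 = w * ofList r := by
  induction l with
  | nil => exact fun w u => ⟨[], by simp, by simp [runF_nil, ofList_nil]⟩
  | cons a l ih =>
    intro w u
    rw [runF_cons]
    by_cases hc : a ∈ B ∧ ∀ c ∈ toList u, θ a c
    · rw [step_pos θ B w u hc]
      obtain ⟨r, hrB, hr⟩ := ih (w * of a) u
      refine ⟨a :: r, ?_, ?_⟩
      · intro c hm
        rcases List.mem_cons.mp hm with rfl | hm
        · exact hc.1
        · exact hrB c hm
      · rw [hr, ofList_cons, mul_assoc]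
    · rw [step_neg θ B w u hc]
      exact ih w (u * of a)

lemma comm_all {a : A} (l : List A) (h : ∀ c ∈ l, θ a c) :
    trMk θ (ofList l) * trMk θ (of a) = trMk θ (of a) * trMk θ (ofList l) := by
  induction l with
  | nil => simp [ofList_nil]
  | cons c l ih =>
    have hswap : trMk θ (of c) * trMk θ (of a) = trMk θ (of a) * trMk θ (of c) := by
      have := trMk_swap θ (h c (List.mem_cons_self))
      simpa [map_mul] using this.symm
    have ih' := ih (fun c hm => h c (List.mem_cons_of_mem _ hm))
    rw [ofList_cons, map_mul, mul_assoc, ih', ← mul_assoc, hswap, mul_assoc]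

lemma runF_prod (l : List A) : ∀ w u : FreeMonoid A,
    trMk θ (runF θ B (w, u) l).1 * trMk θ (runF θ B (w, u) l).2 =
      trMk θ w * trMk θ u * trMk θ (ofList l) := by
  induction l with
  | nil => intro w u; simp [runF_nil, ofList_nil]
  | cons a l ih =>
    intro w u
    rw [runF_cons, ofList_cons]
    by_cases hc : a ∈ B ∧ ∀ c ∈ toList u, θ a c
    · rw [step_pos θ B w u hc, ih]
      have hcomm : trMk θ u * trMk θ (of a) = trMk θ (of a) * trMk θ u := by
        have := comm_all θ (toList u) hc.2
        simpa [ofList_toList] using this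
      simp only [map_mul, mul_assoc]
      congr 1
      rw [← mul_assoc, ← mul_assoc, hcomm]
    · rw [step_neg θ B w u hc, ih]
      simp only [map_mul, mul_assoc]

/-- No letter of `B` is extractable from `u` after the prefix `v`. -/
def QR (v u : List A) : Prop :=
  ∀ p b s, u = p ++ b :: s → b ∈ B → ∃ c ∈ v ++ p, ¬ θ b c

lemma runF_fix (l : List A) : ∀ w u : FreeMonoid A,
    QR θ B (toList u) l → runF θ B (w, u) l = (w, u * ofList l) := by
  induction l with
  | nil => intro w u _; simp [runF_nil, ofList_nil]
  | cons a l ih =>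
    intro w u hQ
    have hna : ¬ (a ∈ B ∧ ∀ c ∈ toList u, θ a c) := by
      rintro ⟨haB, hall⟩
      obtain ⟨c, hcm, hnc⟩ := hQ [] a l rfl haB
      exact hnc (hall c (by simpa using hcm))
    rw [runF_cons, step_neg θ B w u hna]
    have hQ' : QR θ B (toList (u * of a)) l := by
      intro p b s hdec hbB
      obtain ⟨c, hcm, hnc⟩ := hQ (a :: p) b s (by simp [hdec]) hbB
      refine ⟨c, ?_, hnc⟩
      rw [toList_mul, toList_of]
      simp only [List.mem_append, List.mem_cons, List.mem_singleton] at hcm ⊢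
      tauto
    rw [ih w (u * of a) hQ']
    rw [ofList_cons, ← mul_assoc]

lemma QR_append {u u' : List A} (h : QR θ B [] u) (h' : QR θ B [] u') :
    QR θ B [] (u ++ u') := by
  intro p b s hdec hbB
  rcases List.append_eq_append_iff.mp hdec with ⟨a', rfl, hu'⟩ | ⟨c', rfl, hcs⟩
  · obtain ⟨c, hcm, hnc⟩ := h' a' b s hu' hbB
    refine ⟨c, ?_, hnc⟩
    simp only [List.nil_append, List.mem_append] at hcm ⊢
    exact Or.inr hcm
  · cases c' with
    | nil =>
      obtain ⟨c, hcm, _⟩ := h' [] b s (by simpa using hcs.symm) hbB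
      simp at hcm
    | cons x t =>
      simp only [List.cons_append] at hcs
      obtain ⟨rfl, rfl⟩ := List.cons.inj hcs
      obtain ⟨c, hcm, hnc⟩ := h p b t rfl hbB
      exact ⟨c, hcm, hnc⟩

lemma runF_q (l : List A) : ∀ w u : FreeMonoid A,
    QR θ B [] (toList u) → QR θ B [] (toList (runF θ B (w, u) l).2) := by
  induction l with
  | nil => intro w u h; exact h
  | cons a l ih =>
    intro w u h
    rw [runF_cons]
    by_cases hc : a ∈ B ∧ ∀ c ∈ toList u, θ a c
    · rw [step_pos θ B w u hc]; exact ih _ _ h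
    · rw [step_neg θ B w u hc]
      apply ih
      rw [toList_mul, toList_of]
      intro p b s hdec hbB
      rcases List.eq_nil_or_concat s with rfl | ⟨t, c, rfl⟩
      · have hlen : ([a] : List A).length = [b].length := by simp
        obtain ⟨hu, hab⟩ := List.append_inj' hdec hlen
        obtain rfl : a = b := by simpa using hab
        rcases Classical.em (∀ c ∈ toList u, θ a c) with hall | hnall
        · exact absurd ⟨hbB, hall⟩ hc
        · push_neg at hnall
          obtain ⟨c, hcm, hnc⟩ := hnall
          exact ⟨c, by simpa [hu] using hcm, hnc⟩
      · rw [List.concat_eq_append] at hdec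
        have hdec' : toList u ++ [a] = (p ++ b :: t) ++ [c] := by
          rw [hdec]; simp
        have hlen : ([a] : List A).length = [c].length := by simp
        obtain ⟨hu, _⟩ := List.append_inj' hdec' hlen
        obtain ⟨d, hdm, hnd⟩ := h p b t hu hbB
        exact ⟨d, hdm, hnd⟩

lemma runF_B (l : List A) (h : ∀ c ∈ l, c ∈ B) :
    ∀ w : FreeMonoid A, runF θ B (w, 1) l = (w * ofList l, 1) := by
  induction l with
  | nil => intro w; simp [runF_nil, ofList_nil]
  | cons a l ih =>
    intro w
    have hc : a ∈ B ∧ ∀ c ∈ toList (1 : FreeMonoid A), θ a c := by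
      refine ⟨h a List.mem_cons_self, ?_⟩
      intro c hm
      simp [toList_one] at hm
    rw [runF_cons, step_pos θ B w 1 hc]
    rw [ih (fun c hm => h c (List.mem_cons_of_mem _ hm)) (w * of a)]
    rw [ofList_cons, mul_assoc]

lemma key (hsymm : ∀ a b, θ a b → θ b a) {l : List A}
    (h1 : trMk θ (runF θ B (1, 1) l).1 = 1) {a : A} (haB : a ∈ B) {v : Trace A θ}
    (hv : trMk θ (ofList l) = trOf θ a * v) : False := by
  obtain ⟨x, hx⟩ := trace_rep θ v
  have h2 : trMk θ (ofList l) = trMk θ (ofList (a :: x)) := by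
    rw [hv, ← hx, ofList_cons, map_mul]; rfl
  have he := runF_eqv θ B hsymm h2
  rw [toList_ofList, toList_ofList] at he
  have hstep : runF θ B (1, 1) (a :: x) = runF θ B (of a, 1) x := by
    have hc : a ∈ B ∧ ∀ c ∈ toList (1 : FreeMonoid A), θ a c :=
      ⟨haB, by intro c hm; simp [toList_one] at hm⟩
    rw [runF_cons, step_pos θ B 1 1 hc, one_mul]
  obtain ⟨r, -, hr⟩ := runF_fst θ B x (of a) 1
  have hne : trMk θ (runF θ B (of a, 1) x).1 ≠ 1 := by
    rw [hr, map_mul]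
    exact mul_trOf_ne_one θ a (trMk θ (ofList r))
  rw [hstep] at he
  exact hne (he.1.symm.trans h1)

lemma inM (hsymm : ∀ a b, θ a b → θ b a) {u : List A} (hQ : QR θ B [] u) :
    ∀ a ∈ IA θ (trMk θ (ofList u)), a ∉ B := by
  rintro a ⟨v, hv⟩ haB
  have hrun := runF_fix θ B u 1 1 (by simpa [toList_one] using hQ)
  have h1 : trMk θ (runF θ B (1, 1) u).1 = 1 := by rw [hrun]; simp
  exact key θ B hsymm h1 haB hv

lemma qr_of_mem {u : List A} (h : ∀ a ∈ IA θ (trMk θ (ofList u)), a ∉ B) :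
    QR θ B [] u := by
  intro p b s hdec hbB
  by_contra hno
  push_neg at hno
  refine h b ⟨trMk θ (ofList (p ++ s)), ?_⟩ hbB
  have hc := comm_all θ p (fun c hm => hno c (by simpa using hm))
  subst hdec
  have hsplit : ofList (p ++ b :: s) = ofList p * of b * ofList s := by
    rw [ofList_append, ofList_cons, mul_assoc]
  rw [hsplit]
  simp only [map_mul]
  rw [hc, ofList_append, map_mul, mul_assoc]
  rfl

lemma subTr_rep {w : Trace A θ} (h : w ∈ subTr θ B) :
    ∃ wl : List A, (∀ c ∈ wl, c ∈ B) ∧ trMk θ (ofList wl) = w := by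
  induction h using Submonoid.closure_induction with
  | mem x hx =>
    obtain ⟨a, haB, rfl⟩ := hx
    exact ⟨[a], by simpa using haB, by rw [ofList_singleton]; rfl⟩
  | one => exact ⟨[], by simp, by simp [ofList_nil]⟩
  | mul x y hx hy ihx ihy =>
    obtain ⟨xl, hxl, rfl⟩ := ihx
    obtain ⟨yl, hyl, rfl⟩ := ihy
    refine ⟨xl ++ yl, ?_, by rw [ofList_append, map_mul]⟩
    intro c hm
    rcases List.mem_append.mp hm with hm | hm
    · exact hxl c hm
    · exact hyl c hm

lemma mem_subTr (wl : List A) (h : ∀ c ∈ wl, c ∈ B) :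
    trMk θ (ofList wl) ∈ subTr θ B := by
  induction wl with
  | nil => simpa [ofList_nil] using (subTr θ B).one_mem
  | cons a l ih =>
    rw [ofList_cons, map_mul]
    exact mul_mem (Submonoid.subset_closure ⟨a, h a List.mem_cons_self, rfl⟩)
      (ih fun c hm => h c (List.mem_cons_of_mem _ hm))

end PCMProof

open PCM in
/-- for any subalphabet `B`, the set of traces with no initial letter
in `B` is a submonoid `M`, and `M(A,θ) = M(B,θ_B)·M` is a bisection. -/
theorem stmt_0 {A : Type*} [Fintype A] (θ : A → A → Prop)
    (hanti : ∀ a, ¬ θ a a) (hsymm : ∀ a b, θ a b → θ b a) (B : Set A) :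
    ∃ M : Submonoid (Trace A θ),
      (M : Set (Trace A θ)) = {t | ∀ a ∈ IA θ t, a ∉ B} ∧
      ∀ t : Trace A θ,
        ∃! p : subTr θ B × M, (p.1 : Trace A θ) * (p.2 : Trace A θ) = t := by
  classical
  refine ⟨{ carrier := {t | ∀ a ∈ IA θ t, a ∉ B}
            one_mem' := ?_
            mul_mem' := ?_ }, rfl, ?_⟩
  · intro x y hx hy
    obtain ⟨u, rfl⟩ := PCMProof.trace_rep θ x
    obtain ⟨u', rfl⟩ := PCMProof.trace_rep θ y
    have hq := PCMProof.QR_append θ B (PCMProof.qr_of_mem θ B hx)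
      (PCMProof.qr_of_mem θ B hy)
    have hmul : trMk θ (FreeMonoid.ofList (u ++ u')) =
        trMk θ (FreeMonoid.ofList u) * trMk θ (FreeMonoid.ofList u') := by
      rw [FreeMonoid.ofList_append, map_mul]
    intro a ha
    rw [← hmul] at ha
    exact PCMProof.inM θ B hsymm hq a ha
  · rintro x ⟨v, hv⟩
    exact absurd hv.symm (PCMProof.mul_trOf_ne_one θ x v)
  · intro t
    obtain ⟨l, rfl⟩ := PCMProof.trace_rep θ t
    obtain ⟨r, hrB, hr⟩ := PCMProof.runF_fst θ B l 1 1
    have hW : trMk θ (PCMProof.runF θ B (1, 1) l).1 ∈ subTr θ B := by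
      rw [hr, one_mul]
      exact PCMProof.mem_subTr θ B r hrB
    have hq0 : PCMProof.QR θ B [] (FreeMonoid.toList (1 : FreeMonoid A)) := by
      intro p b s hdec hbB
      simp [FreeMonoid.toList_one, eq_comm] at hdec
    have hq2 : PCMProof.QR θ B []
        (FreeMonoid.toList (PCMProof.runF θ B (1, 1) l).2) :=
      PCMProof.runF_q θ B l 1 1 hq0
    have hU : trMk θ (PCMProof.runF θ B (1, 1) l).2 ∈
        {t : Trace A θ | ∀ a ∈ IA θ t, a ∉ B} := by
      have := PCMProof.inM θ B hsymm hq2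
      rwa [FreeMonoid.ofList_toList] at this
    refine ⟨(⟨_, hW⟩, ⟨_, hU⟩), ?_, ?_⟩
    · show trMk θ (PCMProof.runF θ B (1, 1) l).1 *
        trMk θ (PCMProof.runF θ B (1, 1) l).2 = trMk θ (FreeMonoid.ofList l)
      rw [PCMProof.runF_prod θ B l 1 1]
      simp
    · rintro ⟨⟨w, hw⟩, ⟨u, hu⟩⟩ hq
      obtain ⟨wl, hwlB, rfl⟩ := PCMProof.subTr_rep θ B hw
      obtain ⟨ul, rfl⟩ := PCMProof.trace_rep θ u
      have hQu : PCMProof.QR θ B [] ul := PCMProof.qr_of_mem θ B hu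
      have h1 : PCMProof.runF θ B (1, 1) (wl ++ ul) =
          (FreeMonoid.ofList wl, FreeMonoid.ofList ul) := by
        rw [PCMProof.runF_append, PCMProof.runF_B θ B wl hwlB 1, one_mul,
          PCMProof.runF_fix θ B ul (FreeMonoid.ofList wl) 1 hQu, one_mul]
      have heq : trMk θ (FreeMonoid.ofList (wl ++ ul)) = trMk θ (FreeMonoid.ofList l) := by
        rw [FreeMonoid.ofList_append, map_mul]
        exact hq
      have he := PCMProof.runF_eqv θ B hsymm heq
      rw [FreeMonoid.toList_ofList, FreeMonoid.toList_ofList, h1] at he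
      exact Prod.ext (Subtype.ext he.1) (Subtype.ext he.2)
end

section
/- Let A be a finite alphabet, θ ⊆ A × A an antireflexive symmetric relation, B ⊆ A, and Z = A − B. If the dependence graph of (A,θ) contains a path z − b₁ − ⋯ − bₙ − z' with z ≠ z' in Z, (z,z') ∈ θ, and all b₁,…,bₙ ∈ B, then β_Z(B) is not a partially commutative code: there exist distinct elements u₁, u₂, v₁, v₂ of β_Z(B) with u₁·u₂ = v₁·v₂ in M(A,θ) but {u₁,u₂} ≠ {v₁,v₂} as ordered decompositions modulo the induced commutations. -/
namespace PCM

variable {A : Type*}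

section Aux

variable {A : Type*} {θ : A → A → Prop}

theorem trMk_eq_iff {w₁ w₂ : FreeMonoid A} :
    trMk θ w₁ = trMk θ w₂ ↔ traceCon θ w₁ w₂ := by
  rw [trMk, ← Con.ker_rel, Con.mk'_ker]

theorem invariant {M : Type*} [Monoid M] (φ : FreeMonoid A →* M)
    (h : ∀ a b, θ a b → φ (.of a) * φ (.of b) = φ (.of b) * φ (.of a))
    {w₁ w₂ : FreeMonoid A} (hw : trMk θ w₁ = trMk θ w₂) : φ w₁ = φ w₂ := by
  have hle : traceCon θ ≤ Con.ker φ := by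
    apply Con.conGen_le.mpr
    rintro x y ⟨a, b, hab, rfl, rfl⟩
    simpa using h a b hab
  exact hle (trMk_eq_iff.mp hw)

/-- abelianization homomorphism -/
noncomputable def mset : FreeMonoid A →* Multiplicative (Multiset A) :=
  FreeMonoid.lift (fun a => Multiplicative.ofAdd {a})

theorem mset_ofList (l : List A) :
    mset (FreeMonoid.ofList l) = Multiplicative.ofAdd (l : Multiset A) := by
  induction l with
  | nil => rfl
  | cons a t ih =>
    rw [FreeMonoid.ofList_cons, map_mul, ih]
    rfl

theorem mset_eq {l₁ l₂ : List A}
    (hw : trMk θ (FreeMonoid.ofList l₁) = trMk θ (FreeMonoid.ofList l₂)) :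
    (l₁ : Multiset A) = (l₂ : Multiset A) := by
  have := invariant (θ := θ) mset (by
    intro a b hab
    simp only [mset, FreeMonoid.lift_eval_of]
    exact mul_comm _ _) hw
  rw [mset_ofList, mset_ofList] at this
  exact Multiplicative.ofAdd.injective this

open Classical in
/-- projection to a pair of letters -/
noncomputable def proj (x d : A) : FreeMonoid A →* FreeMonoid A :=
  FreeMonoid.lift (fun a => if a = x ∨ a = d then FreeMonoid.of a else 1)

open Classical in
theorem proj_ofList (x d : A) (l : List A) :
    proj x d (FreeMonoid.ofList l) =
      FreeMonoid.ofList (l.filter (fun a => decide (a = x ∨ a = d))) := by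
  induction l with
  | nil => rfl
  | cons a t ih =>
    rw [FreeMonoid.ofList_cons, map_mul, ih]
    by_cases h : a = x ∨ a = d
    · rw [List.filter_cons_of_pos (by simpa using h), FreeMonoid.ofList_cons]
      congr 1
      simp [proj, h]
    · rw [List.filter_cons_of_neg (by simpa using h)]
      have : proj x d (FreeMonoid.of a) = 1 := by simp [proj, h]
      rw [this, one_mul]

theorem head_aux {d : A} {u r : List A} (hu : ∀ b ∈ u, b = d) :
    (u ++ d :: r).head? = some d := by
  cases u with
  | nil => rfl
  | cons b t => simpa using hu b (by simp)

theorem not_initial (hanti : ∀ a, ¬ θ a a) {x d : A} (hxd : x ≠ d)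
    (hθ1 : ¬ θ x d) (hθ2 : ¬ θ d x) (u v : List A) (hu : x ∉ u) :
    x ∉ IA θ (trMk θ (FreeMonoid.ofList (u ++ d :: v))) := by
  classical
  rintro ⟨w, hw⟩
  obtain ⟨w', rfl⟩ := Con.mk'_surjective w
  have key : trMk θ (FreeMonoid.ofList (x :: FreeMonoid.toList w')) =
      trOf θ x * (traceCon θ).mk' w' := by
    rw [FreeMonoid.ofList_cons, FreeMonoid.ofList_toList, map_mul]; rfl
  have hw2 : trMk θ (FreeMonoid.ofList (u ++ d :: v)) =
      trMk θ (FreeMonoid.ofList (x :: FreeMonoid.toList w')) := hw.trans key.symm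
  have hproj := invariant (θ := θ) (proj x d) (by
    intro a b hab
    by_cases ha : a = x ∨ a = d
    · by_cases hb : b = x ∨ b = d
      · exfalso
        have hne : a ≠ b := fun h => hanti a (h ▸ hab)
        rcases ha with rfl | rfl <;> rcases hb with rfl | rfl
        · exact hne rfl
        · exact hθ1 hab
        · exact hθ2 hab
        · exact hne rfl
      · have : proj x d (FreeMonoid.of b) = 1 := by simp [proj, hb]
        rw [this, one_mul, mul_one]
    · have : proj x d (FreeMonoid.of a) = 1 := by simp [proj, ha]
      rw [this, one_mul, mul_one]) hw2
  rw [proj_ofList, proj_ofList] at hproj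
  have hlists := congrArg FreeMonoid.toList hproj
  rw [FreeMonoid.toList_ofList, FreeMonoid.toList_ofList] at hlists
  have hheads := congrArg List.head? hlists
  rw [List.filter_append, List.filter_cons_of_pos (by simp),
    List.filter_cons_of_pos (by simp)] at hheads
  rw [head_aux (fun b hb => by
    have hmem := List.mem_filter.mp hb
    have : b = x ∨ b = d := by simpa using hmem.2
    rcases this with rfl | rfl
    · exact absurd hmem.1 hu
    · rfl)] at hheads
  simp only [List.head?_cons, Option.some.injEq] at hheads
  exact hxd hheads.symm

theorem first_occ {R : A → A → Prop} {x : A} :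
    ∀ (a : A) (w : List A), List.Chain R a w → x ∈ w → x ≠ a →
      ∃ u d v, a :: w = u ++ d :: x :: v ∧ x ∉ u ∧ R d x
  | a, b :: w', hch, hmem, hxa => by
    replace hch := List.isChain_cons_cons.mp hch
    by_cases hxb : x = b
    · exact ⟨[], a, w', by rw [hxb]; rfl, by simp, hxb ▸ hch.1⟩
    · have hmem' : x ∈ w' := by
        rcases List.mem_cons.mp hmem with h | h
        · exact absurd h hxb
        · exact h
      obtain ⟨u, d, v, hsplit, hxu, hdx⟩ := first_occ b w' hch.2 hmem' hxb
      exact ⟨a :: u, d, v, by rw [List.cons_append, ← hsplit], by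
        simp only [List.mem_cons, not_or]
        exact ⟨hxa, hxu⟩, hdx⟩

theorem chain_IA (hanti : ∀ a, ¬ θ a a) (hsymm : ∀ a b, θ a b → θ b a)
    {a : A} {w : List A} (hch : List.Chain (dep θ) a w) :
    IA θ (trMk θ (FreeMonoid.ofList (a :: w))) = {a} := by
  ext x
  simp only [Set.mem_singleton_iff]
  constructor
  · rintro hx
    by_contra hxa
    by_cases hmem : x ∈ w
    · obtain ⟨u, d, v, hsplit, hxu, hdx⟩ := first_occ a w hch hmem hxa
      rw [hsplit] at hx
      have hux : u ++ d :: x :: v = (u ++ [d]) ++ x :: v := by simp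
      exact not_initial hanti hdx.1.symm (fun h => hdx.2 (hsymm _ _ h)) hdx.2 u (x :: v) hxu hx
    · obtain ⟨t, ht⟩ := hx
      obtain ⟨t', rfl⟩ := Con.mk'_surjective t
      have key : trMk θ (FreeMonoid.ofList (x :: FreeMonoid.toList t')) =
          trOf θ x * (traceCon θ).mk' t' := by
        rw [FreeMonoid.ofList_cons, FreeMonoid.ofList_toList, map_mul]; rfl
      have ht2 : trMk θ (FreeMonoid.ofList (a :: w)) =
          trMk θ (FreeMonoid.ofList (x :: FreeMonoid.toList t')) := ht.trans key.symm
      have := mset_eq ht2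
      have hxmem : x ∈ ((a :: w : List A) : Multiset A) := by
        rw [this]; simp
      simp only [Multiset.mem_coe, List.mem_cons] at hxmem
      rcases hxmem with h | h
      · exact hxa h
      · exact hmem h
  · rintro rfl
    exact ⟨trMk θ (FreeMonoid.ofList w), by
      rw [FreeMonoid.ofList_cons, map_mul]; rfl⟩

theorem swap_head {b x : A} (hbx : θ b x) (r : FreeMonoid A) :
    trMk θ (FreeMonoid.of b * FreeMonoid.of x * r) =
      trMk θ (FreeMonoid.of x * FreeMonoid.of b * r) := by
  apply trMk_eq_iff.mpr
  exact (traceCon θ).mul (ConGen.Rel.of _ _ ⟨b, x, hbx, rfl, rfl⟩) ((traceCon θ).refl r)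

theorem shift (x : A) (u : List A) (hu : ∀ b ∈ u, θ b x) (v : List A) :
    trMk θ (FreeMonoid.ofList (u ++ x :: v)) =
      trMk θ (FreeMonoid.ofList (x :: (u ++ v))) := by
  induction u with
  | nil => rfl
  | cons b t ih =>
    have h1 := ih (fun c hc => hu c (List.mem_cons_of_mem _ hc))
    calc trMk θ (FreeMonoid.ofList ((b :: t) ++ x :: v))
        = trMk θ (FreeMonoid.of b) * trMk θ (FreeMonoid.ofList (t ++ x :: v)) := by
          rw [List.cons_append, FreeMonoid.ofList_cons, map_mul]
      _ = trMk θ (FreeMonoid.of b) * trMk θ (FreeMonoid.ofList (x :: (t ++ v))) := by rw [h1]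
      _ = trMk θ (FreeMonoid.of b * FreeMonoid.of x * FreeMonoid.ofList (t ++ v)) := by
          simp [FreeMonoid.ofList_cons, map_mul, mul_assoc]
      _ = trMk θ (FreeMonoid.of x * FreeMonoid.of b * FreeMonoid.ofList (t ++ v)) :=
          swap_head (hu b List.mem_cons_self) _
      _ = trMk θ (FreeMonoid.ofList (x :: ((b :: t) ++ v))) := by
          simp [FreeMonoid.ofList_cons, map_mul, mul_assoc]

theorem mem_subTr {B : Set A} {l : List A} (hl : ∀ b ∈ l, b ∈ B) :
    trMk θ (FreeMonoid.ofList l) ∈ subTr θ B := by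
  induction l with
  | nil => exact (subTr θ B).one_mem
  | cons b t ih =>
    rw [FreeMonoid.ofList_cons, map_mul]
    exact (subTr θ B).mul_mem
      (Submonoid.subset_closure ⟨b, hl b List.mem_cons_self, rfl⟩)
      (ih fun c hc => hl c (List.mem_cons_of_mem _ hc))

theorem chain_append_left {R : A → A → Prop} :
    ∀ (a : A) (l₁ l₂ : List A), List.Chain R a (l₁ ++ l₂) → List.Chain R a l₁
  | _, [], _, _ => List.Chain.nil
  | a, b :: t, l₂, h => by
    rw [List.cons_append] at h; replace h := List.isChain_cons_cons.mp h
    exact List.Chain.cons h.1 (chain_append_left b t l₂ h.2)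

end Aux

end PCM

open PCM in
/-- a dependence path between two independent letters of `Z` with inner
vertices in `B` prevents `β_Z(B)` from being a partially commutative code. -/
theorem stmt_1 {A : Type*} [Fintype A] (θ : A → A → Prop)
    (hanti : ∀ a, ¬ θ a a) (hsymm : ∀ a b, θ a b → θ b a) (B : Set A)
    (z z' : A) (hz : z ∉ B) (hz' : z' ∉ B) (hne : z ≠ z') (hθ : θ z z')
    (hpath : DepPathB θ B z z') :
    ¬ IsPCCode θ (beta θ B) ∧
      ∃ u₁ ∈ beta θ B, ∃ u₂ ∈ beta θ B, ∃ v₁ ∈ beta θ B, ∃ v₂ ∈ beta θ B,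
        u₁ * u₂ = v₁ * v₂ ∧
        ¬ ((u₁ = v₁ ∧ u₂ = v₂) ∨
           (u₁ = v₂ ∧ u₂ = v₁ ∧ ∀ a ∈ Alph θ u₁, ∀ b ∈ Alph θ u₂, θ a b)) := by
  classical
  -- extract a path of minimal length
  have hex : ∃ k : ℕ, ∃ l : List A, l.length = k ∧ (∀ b ∈ l, b ∈ B) ∧
      List.Chain (dep θ) z (l ++ [z']) := by
    obtain ⟨l, h1, h2⟩ := hpath
    exact ⟨l.length, l, rfl, h1, h2⟩
  obtain ⟨l, hlen, hlB, hch⟩ := Nat.find_spec hex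
  have hmin := fun k (hk : k < Nat.find hex) => Nat.find_min hex hk
  -- l is nonempty
  have hlne : l ≠ [] := by
    rintro rfl
    rw [List.nil_append] at hch; replace hch := List.isChain_pair.mp hch
    exact hch.2 hθ
  obtain ⟨m, y, rfl⟩ : ∃ m y, l = m ++ [y] := by
    rcases l.eq_nil_or_concat with h | ⟨m, y, h⟩
    · exact absurd h hlne
    · exact ⟨m, y, by rw [h, List.concat_eq_append]⟩
  -- basic facts from the chain
  have hsplit1 : List.Chain (dep θ) z (m ++ [y]) ∧ List.Chain (dep θ) y [z'] := by
    exact List.isChain_cons_split.mp (by rw [List.append_assoc] at hch; exact hch)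
  have hyz' : dep θ y z' := List.isChain_pair.mp hsplit1.2
  have hCzm : List.Chain (dep θ) z m := chain_append_left z m [y] hsplit1.1
  -- minimality : every letter of m is independent from z'
  have hmθ : ∀ b ∈ m, θ b z' := by
    intro b hb
    by_contra hbθ
    obtain ⟨u, v, huv⟩ := List.append_of_mem hb
    have hbB : b ∈ B := hlB b (by simp [huv])
    have hbz' : b ≠ z' := fun h => hz' (h ▸ hbB)
    have hpre : List.Chain (dep θ) z (u ++ [b]) := by
      have h0 := hsplit1.1
      rw [huv] at h0
      have h2 : List.Chain (dep θ) z (u ++ b :: (v ++ [y])) := by simpa using h0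
      exact (List.isChain_cons_split.mp h2).1
    have hchain' : List.Chain (dep θ) z ((u ++ [b]) ++ [z']) := by
      have he : (u ++ [b]) ++ [z'] = u ++ b :: [z'] := by simp
      rw [he]
      exact List.isChain_cons_split.mpr ⟨hpre, List.isChain_pair.mpr ⟨hbz', hbθ⟩⟩
    have hlt : (u ++ [b]).length < Nat.find hex := by
      rw [← hlen, huv]
      simp
    exact hmin _ hlt ⟨u ++ [b], rfl, fun c hc => hlB c (by
      rw [huv]
      simp only [List.mem_append, List.mem_cons, List.mem_singleton] at hc ⊢
      tauto), hchain'⟩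
  -- chains for the witnesses
  have hdepsymm : ∀ a b, dep θ a b → dep θ b a :=
    fun a b h => ⟨h.1.symm, fun h2 => h.2 (hsymm _ _ h2)⟩
  have hCym : List.Chain (dep θ) y m.reverse := by
    have h1 : List.Chain' (dep θ) (z :: (m ++ [y])) := hsplit1.1
    have h2 : List.Chain' (flip (dep θ)) (z :: (m ++ [y])) :=
      h1.imp (fun a b h => hdepsymm a b h)
    have h3 : List.Chain' (dep θ) ((z :: (m ++ [y])).reverse) :=
      List.isChain_reverse.mpr h2
    have h4 : (z :: (m ++ [y])).reverse = y :: (m.reverse ++ [z]) := by simp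
    rw [h4] at h3
    exact chain_append_left y m.reverse [z] h3
  have hC2 : List.Chain (dep θ) z' (y :: m.reverse) :=
    List.Chain.cons (hdepsymm _ _ hyz') hCym
  have hC3 : List.Chain (dep θ) z (m ++ y :: m.reverse) :=
    List.isChain_cons_split.mpr ⟨hsplit1.1, hCym⟩
  -- the witnesses
  set W₁ : List A := z :: m with hW₁
  set W₂ : List A := z' :: (y :: m.reverse) with hW₂
  set V₂ : List A := z :: (m ++ y :: m.reverse) with hV₂
  set u₁ := trMk θ (FreeMonoid.ofList W₁) with hu₁
  set u₂ := trMk θ (FreeMonoid.ofList W₂) with hu₂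
  set v₁ := trMk θ (FreeMonoid.ofList [z']) with hv₁
  set v₂ := trMk θ (FreeMonoid.ofList V₂) with hv₂
  have hyB : y ∈ B := hlB y (by simp)
  have hmB : ∀ b ∈ m, b ∈ B := fun b hb => hlB b (by simp [hb])
  -- membership in beta
  have hu₁β : u₁ ∈ beta θ B := by
    refine ⟨z, hz, trMk θ (FreeMonoid.ofList m), mem_subTr hmB, ?_, ?_⟩
    · rw [hu₁, hW₁, FreeMonoid.ofList_cons, map_mul]; rfl
    · exact chain_IA hanti hsymm hCzm
  have hu₂β : u₂ ∈ beta θ B := by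
    refine ⟨z', hz', trMk θ (FreeMonoid.ofList (y :: m.reverse)), ?_, ?_, ?_⟩
    · exact mem_subTr (fun b hb => by
        rcases List.mem_cons.mp hb with rfl | h
        · exact hyB
        · exact hmB b (List.mem_reverse.mp h))
    · rw [hu₂, hW₂, FreeMonoid.ofList_cons, map_mul]; rfl
    · exact chain_IA hanti hsymm hC2
  have hv₁β : v₁ ∈ beta θ B := by
    refine ⟨z', hz', 1, (subTr θ B).one_mem, (mul_one _).symm, ?_⟩
    exact chain_IA hanti hsymm List.Chain.nil
  have hv₂β : v₂ ∈ beta θ B := by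
    refine ⟨z, hz, trMk θ (FreeMonoid.ofList (m ++ y :: m.reverse)), ?_, ?_, ?_⟩
    · exact mem_subTr (fun b hb => by
        simp only [List.mem_append, List.mem_cons, List.mem_reverse] at hb
        rcases hb with h | rfl | h
        · exact hmB b h
        · exact hyB
        · exact hmB b h)
    · rw [hv₂, hV₂, FreeMonoid.ofList_cons, map_mul]; rfl
    · exact chain_IA hanti hsymm hC3
  -- the equality of products
  have hprod : u₁ * u₂ = v₁ * v₂ := by
    have h1 : u₁ * u₂ = trMk θ (FreeMonoid.ofList (W₁ ++ W₂)) := by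
      rw [FreeMonoid.ofList_append, map_mul]
    have h2 : W₁ ++ W₂ = (z :: m) ++ z' :: (y :: m.reverse) := rfl
    have h3 := shift (θ := θ) z' (z :: m) (fun b hb => by
      rcases List.mem_cons.mp hb with rfl | h
      · exact hθ
      · exact hmθ b h) (y :: m.reverse)
    have h4 : v₁ * v₂ = trMk θ (FreeMonoid.ofList (z' :: V₂)) := by
      rw [FreeMonoid.ofList_cons, map_mul]; rfl
    rw [h1, h2, h3, h4]
    rfl
  -- distinctness
  have hne1 : u₁ ≠ v₁ := by
    intro h
    have h' : trMk θ (FreeMonoid.ofList W₁) = trMk θ (FreeMonoid.ofList [z']) := h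
    have := mset_eq h'
    have hzz : z ∈ (([z'] : List A) : Multiset A) := by
      rw [← this]; simp [hW₁]
    simp only [Multiset.coe_singleton, Multiset.mem_singleton] at hzz
    exact hne hzz
  have hne2 : u₁ ≠ v₂ := by
    intro h
    have h' : trMk θ (FreeMonoid.ofList W₁) = trMk θ (FreeMonoid.ofList V₂) := h
    have := congrArg Multiset.card (mset_eq h')
    simp only [Multiset.coe_card, hW₁, hV₂, List.length_cons, List.length_append,
      List.length_reverse] at this
    omega
  constructor
  · rintro ⟨f, hf, hinj⟩
    set X := beta θ B
    set x₁ : X := ⟨u₁, hu₁β⟩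
    set x₂ : X := ⟨u₂, hu₂β⟩
    set y₁ : X := ⟨v₁, hv₁β⟩
    set y₂ : X := ⟨v₂, hv₂β⟩
    have heq : trOf (thetaX θ X) x₁ * trOf (thetaX θ X) x₂ =
        trOf (thetaX θ X) y₁ * trOf (thetaX θ X) y₂ := by
      apply hinj
      rw [map_mul, map_mul, hf, hf, hf, hf]
      exact hprod
    have heq' : trMk (thetaX θ X) (FreeMonoid.ofList [x₁, x₂]) =
        trMk (thetaX θ X) (FreeMonoid.ofList [y₁, y₂]) := by
      have e1 : FreeMonoid.ofList [x₁, x₂] = FreeMonoid.of x₁ * FreeMonoid.of x₂ := rfl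
      have e2 : FreeMonoid.ofList [y₁, y₂] = FreeMonoid.of y₁ * FreeMonoid.of y₂ := rfl
      rw [e1, e2, map_mul, map_mul]
      exact heq
    have hms := mset_eq heq'
    have hx₁ : x₁ ∈ (([y₁, y₂] : List X) : Multiset X) := by
      rw [← hms]; simp
    simp only [Multiset.mem_coe, List.mem_cons, List.mem_singleton, List.not_mem_nil,
      or_false] at hx₁
    rcases hx₁ with h | h
    · exact hne1 (Subtype.ext_iff.mp h)
    · exact hne2 (Subtype.ext_iff.mp h)
  · refine ⟨u₁, hu₁β, u₂, hu₂β, v₁, hv₁β, v₂, hv₂β, hprod, ?_⟩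
    rintro (⟨h1, _⟩ | ⟨h1, _, _⟩)
    · exact hne1 h1
    · exact hne2 h1
end

section
/- Let A be a finite alphabet, θ an antireflexive symmetric relation on A, B ⊆ A, Z = A − B. Suppose that for every pair (z,z') ∈ Z² ∩ θ the dependence graph of (A,θ) contains no path z − b₁ − ⋯ − bₙ − z' with all inner vertices bᵢ in B. Then the submonoid of M(A,θ) generated by β_Z(B) is free partially commutative, i.e. isomorphic to the trace monoid M(β_Z(B), θ_{β_Z(B)}), where θ_{β_Z(B)} = {(x₁,x₂) ∈ β_Z(B)² : Alph(x₁) × Alph(x₂) ⊆ θ}. -/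
namespace PCM
section Aux
open Classical in
noncomputable def pfilter {C : Type*} (c d : C) : List C → List C
  | [] => []
  | a :: l => if a = c ∨ a = d then a :: pfilter c d l else pfilter c d l

variable {C : Type*} {c d : C}

lemma pfilter_nil : pfilter c d ([] : List C) = [] := rfl

open Classical in
lemma pfilter_cons (a : C) (l : List C) :
    pfilter c d (a :: l) = if a = c ∨ a = d then a :: pfilter c d l else pfilter c d l := rfl

lemma pfilter_cons_pos {a : C} (h : a = c ∨ a = d) (l : List C) :
    pfilter c d (a :: l) = a :: pfilter c d l := by rw [pfilter_cons, if_pos h]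

lemma pfilter_cons_neg {a : C} (h : ¬(a = c ∨ a = d)) (l : List C) :
    pfilter c d (a :: l) = pfilter c d l := by rw [pfilter_cons, if_neg h]

lemma pfilter_append (l₁ l₂ : List C) :
    pfilter c d (l₁ ++ l₂) = pfilter c d l₁ ++ pfilter c d l₂ := by
  induction l₁ with
  | nil => rfl
  | cons a l ih =>
    by_cases h : a = c ∨ a = d
    · rw [List.cons_append, pfilter_cons_pos h, pfilter_cons_pos h, ih, List.cons_append]
    · rw [List.cons_append, pfilter_cons_neg h, pfilter_cons_neg h, ih]

lemma mem_pfilter {x : C} : ∀ {l : List C}, x ∈ pfilter c d l ↔ x ∈ l ∧ (x = c ∨ x = d)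
  | [] => by simp [pfilter_nil]
  | a :: l => by
    by_cases h : a = c ∨ a = d
    · rw [pfilter_cons_pos h]
      constructor
      · intro hmem
        rcases List.mem_cons.1 hmem with rfl | hx
        · exact ⟨List.mem_cons_self, h⟩
        · exact ⟨List.mem_cons_of_mem _ (mem_pfilter.1 hx).1, (mem_pfilter.1 hx).2⟩
      · rintro ⟨hx, hx2⟩
        rcases List.mem_cons.1 hx with rfl | hx
        · exact List.mem_cons_self
        · exact List.mem_cons_of_mem _ (mem_pfilter.2 ⟨hx, hx2⟩)
    · rw [pfilter_cons_neg h]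
      constructor
      · intro hx; exact ⟨List.mem_cons_of_mem _ (mem_pfilter.1 hx).1, (mem_pfilter.1 hx).2⟩
      · rintro ⟨hx, hx2⟩
        rcases List.mem_cons.1 hx with rfl | hx
        · exact absurd hx2 h
        · exact mem_pfilter.2 ⟨hx, hx2⟩

variable {C : Type*} {ρ : C → C → Prop}

abbrev mkl (ρ : C → C → Prop) (l : List C) : Trace C ρ := trMk ρ (FreeMonoid.ofList l)

lemma mkl_append (l₁ l₂ : List C) : mkl ρ (l₁ ++ l₂) = mkl ρ l₁ * mkl ρ l₂ := rfl
lemma trOf_eq (a : C) : trOf ρ a = mkl ρ [a] := rfl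
lemma mkl_cons (a : C) (l : List C) : mkl ρ (a :: l) = trOf ρ a * mkl ρ l := rfl
lemma mk_surj (t : Trace C ρ) : ∃ l, mkl ρ l = t := by
  obtain ⟨w, hw⟩ := Con.mk'_surjective (c := traceCon ρ) t
  exact ⟨w.toList, by simp only [mkl, FreeMonoid.ofList_toList]; exact hw⟩

lemma mk_eq_iff (u v : FreeMonoid C) : trMk ρ u = trMk ρ v ↔ traceCon ρ u v := Con.eq _

lemma swap {a b : C} (h : ρ a b) : mkl ρ [a, b] = mkl ρ [b, a] := by
  rw [mkl, mk_eq_iff]; exact ConGen.Rel.of _ _ ⟨a, b, h, rfl, rfl⟩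

lemma shift_s2 (a : C) : ∀ (u : List C) (v : List C), (∀ c ∈ u, ρ a c) →
    mkl ρ (u ++ a :: v) = mkl ρ (a :: (u ++ v))
  | [], v, _ => rfl
  | c :: u', v, h => by
    have IH := shift_s2 a u' v (fun x hx => h x (List.mem_cons_of_mem _ hx))
    calc mkl ρ ((c :: u') ++ a :: v) = trOf ρ c * mkl ρ (u' ++ a :: v) := rfl
      _ = trOf ρ c * mkl ρ (a :: (u' ++ v)) := by rw [IH]
      _ = mkl ρ [c, a] * mkl ρ (u' ++ v) := by
          rw [show mkl ρ (a :: (u' ++ v)) = mkl ρ [a] * mkl ρ (u' ++ v) from rfl,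
            show (trOf ρ c : Trace C ρ) = mkl ρ [c] from rfl, ← mul_assoc]; rfl
      _ = mkl ρ [a, c] * mkl ρ (u' ++ v) := by
          rw [swap (h c (List.mem_cons_self))]
      _ = mkl ρ (a :: c :: (u' ++ v)) := rfl

lemma commute_lists (u : List C) : ∀ (v : List C), (∀ b ∈ v, ∀ a ∈ u, ρ b a) →
    mkl ρ (u ++ v) = mkl ρ (v ++ u)
  | [], _ => by simp
  | b :: v', h => by
    have h1 : ∀ c ∈ u, ρ b c := fun c hc => h b (List.mem_cons_self) c hc
    calc mkl ρ (u ++ b :: v') = mkl ρ (b :: (u ++ v')) := shift_s2 b u v' h1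
      _ = trOf ρ b * mkl ρ (u ++ v') := rfl
      _ = trOf ρ b * mkl ρ (v' ++ u) := by
          rw [commute_lists u v' (fun x hx a ha => h x (List.mem_cons_of_mem _ hx) a ha)]
      _ = mkl ρ ((b :: v') ++ u) := rfl

/-- Parikh homomorphism. -/
noncomputable def parikh (ρ : C → C → Prop) : Trace C ρ →* Multiplicative (Multiset C) :=
  Con.lift _ (FreeMonoid.lift (fun a => Multiplicative.ofAdd ({a} : Multiset C)))
    (Con.conGen_le.2 (by
      rintro x y ⟨a, b, h, rfl, rfl⟩
      show FreeMonoid.lift _ _ = FreeMonoid.lift _ _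
      simp [mul_comm]))

lemma parikh_mkl (l : List C) : parikh ρ (mkl ρ l) = Multiplicative.ofAdd (↑l : Multiset C) := by
  induction l with
  | nil => simp [mkl]
  | cons a l ih =>
    rw [mkl_cons, map_mul, ih]
    have : parikh ρ (trOf ρ a) = Multiplicative.ofAdd ({a} : Multiset C) := by
      show Con.lift _ _ _ (Con.mk' _ _) = _
      exact (Con.lift_mk' _ _).trans (FreeMonoid.lift_eval_of _ _)
    rw [this]
    rfl

lemma multiset_eq_of_mkl_eq {u v : List C} (h : mkl ρ u = mkl ρ v) :
    (↑u : Multiset C) = ↑v := by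
  have := congrArg (parikh ρ) h
  rwa [parikh_mkl, parikh_mkl, Multiplicative.ofAdd.apply_eq_iff_eq] at this

lemma mem_of_mkl_eq {u v : List C} (h : mkl ρ u = mkl ρ v) {a : C} (ha : a ∈ u) : a ∈ v := by
  have := multiset_eq_of_mkl_eq h
  rw [← Multiset.mem_coe, ← this, Multiset.mem_coe]; exact ha


lemma first_split {C : Type*} {a : C} : ∀ {l : List C}, a ∈ l → ∃ u v, l = u ++ a :: v ∧ a ∉ u
  | b :: l, h => by
    by_cases hab : a = b
    · exact ⟨[], l, by simp [hab], List.not_mem_nil⟩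
    · rcases List.mem_cons.1 h with h1 | h2
      · exact absurd h1 hab
      · obtain ⟨u, v, rfl, hnu⟩ := first_split h2
        refine ⟨b :: u, v, rfl, ?_⟩
        intro hm
        rcases List.mem_cons.1 hm with rfl | hm
        · exact hab rfl
        · exact hnu hm

open Classical in
noncomputable def projHom (c d : C) : FreeMonoid C →* FreeMonoid C :=
  FreeMonoid.lift (fun a => if a = c ∨ a = d then FreeMonoid.of a else 1)

open Classical in
lemma projHom_of (c d a : C) :
    projHom c d (FreeMonoid.of a) = if a = c ∨ a = d then FreeMonoid.of a else 1 :=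
  FreeMonoid.lift_eval_of _ _

lemma projHom_ofList (c d : C) (l : List C) :
    projHom c d (FreeMonoid.ofList l) = FreeMonoid.ofList (pfilter c d l) := by
  induction l with
  | nil => simp [pfilter_nil]
  | cons a l ih =>
    have h1 : FreeMonoid.ofList (a :: l) = FreeMonoid.of a * FreeMonoid.ofList l := rfl
    rw [h1, map_mul, projHom_of, ih]
    by_cases h : a = c ∨ a = d
    · rw [if_pos h, pfilter_cons_pos h]; rfl
    · rw [if_neg h, pfilter_cons_neg h, one_mul]

lemma pfilter_eq_of_mkl_eq (hanti : ∀ a, ¬ ρ a a) (hsymm : ∀ a b, ρ a b → ρ b a)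
    {c d : C} (hdep : dep ρ c d)
    {u v : List C} (h : mkl ρ u = mkl ρ v) : pfilter c d u = pfilter c d v := by
  have hker : traceCon ρ ≤ Con.ker (projHom c d) := Con.conGen_le.2 (by
    rintro x y ⟨a, b, hab, rfl, rfl⟩
    show projHom c d _ = projHom c d _
    rw [map_mul, map_mul, projHom_of, projHom_of]
    by_cases ha : a = c ∨ a = d
    · by_cases hb : b = c ∨ b = d
      · exfalso
        have hne : a ≠ b := fun e => hanti a (e ▸ hab)
        rcases ha with rfl | rfl <;> rcases hb with rfl | rfl
        · exact hne rfl
        · exact hdep.2 hab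
        · exact hdep.2 (hsymm _ _ hab)
        · exact hne rfl
      · rw [if_pos ha, if_neg hb, one_mul, mul_one]
    · rw [if_neg ha, one_mul, mul_one])
  have h2 : Con.ker (projHom c d) (FreeMonoid.ofList u) (FreeMonoid.ofList v) :=
    hker ((mk_eq_iff _ _).1 h)
  have h3 : projHom c d (FreeMonoid.ofList u) = projHom c d (FreeMonoid.ofList v) := h2
  rw [projHom_ofList, projHom_ofList] at h3
  have := congrArg FreeMonoid.toList h3
  simpa [FreeMonoid.toList_ofList] using this

theorem projP (hanti : ∀ a, ¬ ρ a a) (hsymm : ∀ a b, ρ a b → ρ b a) (u v : List C) :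
    mkl ρ u = mkl ρ v ↔
      ((↑u : Multiset C) = ↑v ∧ ∀ c d, dep ρ c d → pfilter c d u = pfilter c d v) := by
  constructor
  · intro h
    exact ⟨multiset_eq_of_mkl_eq h, fun c d hcd => pfilter_eq_of_mkl_eq hanti hsymm hcd h⟩
  · suffices H : ∀ n (u v : List C), u.length ≤ n → (↑u : Multiset C) = ↑v →
        (∀ c d, dep ρ c d → pfilter c d u = pfilter c d v) → mkl ρ u = mkl ρ v by
      rintro ⟨hm, hp⟩; exact H u.length u v le_rfl hm hp
    intro n
    induction n with
    | zero =>
      intro u v hu hm _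
      have hu0 : u = [] := List.length_eq_zero_iff.1 (Nat.le_zero.1 hu)
      subst hu0
      have : v = [] := by
        have := hm.symm
        rw [Multiset.coe_eq_coe] at this
        exact List.Perm.eq_nil this
      rw [this]
    | succ n ih =>
      intro u v hu hm hp
      cases u with
      | nil =>
        have : v = [] := by
          have := hm.symm
          rw [Multiset.coe_eq_coe] at this
          exact List.Perm.eq_nil this
        rw [this]
      | cons a u' =>
        have hperm : List.Perm (a :: u') v := Multiset.coe_eq_coe.1 hm
        have hav : a ∈ v := hperm.mem_iff.1 (List.mem_cons_self)
        obtain ⟨v₁, v₂, rfl, hnot⟩ := first_split hav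
        have hv₁ : ∀ b ∈ v₁, ρ a b := by
          intro b hb
          by_contra hnab
          have hba : b ≠ a := fun e => hnot (e ▸ hb)
          have hdep : dep ρ a b := ⟨fun e => hba e.symm, hnab⟩
          have base := hp a b hdep
          rw [pfilter_cons_pos (Or.inl rfl), pfilter_append,
            pfilter_cons_pos (Or.inl rfl)] at base
          cases hpf : pfilter a b v₁ with
          | nil =>
            have hbm : b ∈ pfilter a b v₁ := mem_pfilter.2 ⟨hb, Or.inr rfl⟩
            rw [hpf] at hbm
            exact absurd hbm (List.not_mem_nil)
          | cons e w =>
            rw [hpf] at base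
            have he := mem_pfilter.1 (hpf ▸ (List.mem_cons_self (a := e) (l := w)))
            have hae : a = e := by
              have := congrArg List.head? base
              simpa using this
            rcases he.2 with rfl | rfl
            · exact hnot (hae ▸ he.1)
            · exact hba hae.symm
        have hshift : mkl ρ (v₁ ++ a :: v₂) = mkl ρ (a :: (v₁ ++ v₂)) := shift_s2 a v₁ v₂ hv₁
        have hm' : (↑u' : Multiset C) = ↑(v₁ ++ v₂) := by
          rw [Multiset.coe_eq_coe]
          have h2 : List.Perm (a :: u') (a :: (v₁ ++ v₂)) := hperm.trans List.perm_middle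
          exact h2.cons_inv
        have hp' : ∀ c d, dep ρ c d → pfilter c d u' = pfilter c d (v₁ ++ v₂) := by
          intro c d hcd
          have base := hp c d hcd
          rw [pfilter_append] at base
          by_cases hac : a = c ∨ a = d
          · have hv₁f : pfilter c d v₁ = [] := by
              cases hpf : pfilter c d v₁ with
              | nil => rfl
              | cons e w =>
                exfalso
                have he := mem_pfilter.1 (hpf ▸ (List.mem_cons_self (a := e) (l := w)))
                have hae : ρ a e := hv₁ e he.1
                have hane : a ≠ e := fun h => hnot (h ▸ he.1)
                rcases hac with rfl | rfl <;> rcases he.2 with rfl | rfl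
                · exact hane rfl
                · exact hcd.2 hae
                · exact hcd.2 (hsymm _ _ hae)
                · exact hane rfl
            rw [pfilter_cons_pos hac, hv₁f, List.nil_append, pfilter_cons_pos hac] at base
            have htail : pfilter c d u' = pfilter c d v₂ := by
              injection base
            rw [pfilter_append, hv₁f, List.nil_append]
            exact htail
          · rw [pfilter_cons_neg hac, pfilter_cons_neg hac] at base
            rw [pfilter_append]
            exact base
        have IH := ih u' (v₁ ++ v₂) (Nat.le_of_succ_le_succ hu) hm' hp'
        calc mkl ρ (a :: u') = trOf ρ a * mkl ρ u' := rfl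
          _ = trOf ρ a * mkl ρ (v₁ ++ v₂) := by rw [IH]
          _ = mkl ρ (a :: (v₁ ++ v₂)) := rfl
          _ = mkl ρ (v₁ ++ a :: v₂) := hshift.symm

lemma tr_left_cancel (hanti : ∀ a, ¬ ρ a a) (hsymm : ∀ a b, ρ a b → ρ b a)
    {t s s' : Trace C ρ} (h : t * s = t * s') : s = s' := by
  obtain ⟨l, rfl⟩ := mk_surj t
  obtain ⟨w, rfl⟩ := mk_surj s
  obtain ⟨w', rfl⟩ := mk_surj s'
  rw [← mkl_append, ← mkl_append] at h
  rw [projP hanti hsymm] at h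
  rw [projP hanti hsymm]
  constructor
  · have := h.1
    simp only [← Multiset.coe_add] at this
    exact add_left_cancel this
  · intro c d hcd
    have := h.2 c d hcd
    rw [pfilter_append, pfilter_append] at this
    exact List.append_cancel_left this

lemma mem_IA_iff (hanti : ∀ a, ¬ ρ a a) (hsymm : ∀ a b, ρ a b → ρ b a) (a : C) (l : List C) :
    a ∈ IA ρ (mkl ρ l) ↔ ∃ u v, l = u ++ a :: v ∧ ∀ b ∈ u, ρ a b := by
  constructor
  · rintro ⟨w, hw⟩
    obtain ⟨s, rfl⟩ := mk_surj w
    have heq : mkl ρ l = mkl ρ (a :: s) := by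
      rw [hw]; rfl
    rw [projP hanti hsymm] at heq
    have hal : a ∈ l := by
      have := Multiset.coe_eq_coe.1 heq.1
      exact this.symm.mem_iff.1 (List.mem_cons_self)
    obtain ⟨u, v, rfl, hnu⟩ := first_split hal
    refine ⟨u, v, rfl, ?_⟩
    intro b hb
    by_contra hnab
    have hba : b ≠ a := fun e => hnu (e ▸ hb)
    have hdep : dep ρ a b := ⟨fun e => hba e.symm, hnab⟩
    have base := heq.2 a b hdep
    rw [pfilter_append, pfilter_cons_pos (Or.inl rfl), pfilter_cons_pos (Or.inl rfl)] at base
    cases hpf : pfilter a b u with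
    | nil =>
      have hbm : b ∈ pfilter a b u := mem_pfilter.2 ⟨hb, Or.inr rfl⟩
      rw [hpf] at hbm
      exact absurd hbm (List.not_mem_nil)
    | cons e w =>
      rw [hpf] at base
      have he := mem_pfilter.1 (hpf ▸ (List.mem_cons_self (a := e) (l := w)))
      have hae : e = a := by
        have := congrArg List.head? base
        simpa using this
      rcases he.2 with rfl | rfl
      · exact hnu he.1
      · exact hba hae
  · rintro ⟨u, v, rfl, h⟩
    exact ⟨mkl ρ (u ++ v), by rw [shift_s2 a u v h]; rfl⟩

lemma mem_Alph_iff (a : C) (l : List C) : a ∈ Alph ρ (mkl ρ l) ↔ a ∈ l := by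
  constructor
  · rintro ⟨l', hl', ha⟩
    exact mem_of_mkl_eq hl' ha
  · intro h
    exact ⟨l, rfl, h⟩

end Aux

section Paths
variable {A : Type*} {θ : A → A → Prop}

lemma dep_symm (hsymm : ∀ a b, θ a b → θ b a) {a b : A} (h : dep θ a b) : dep θ b a :=
  ⟨h.1.symm, fun hh => h.2 (hsymm _ _ hh)⟩

lemma chain_rev (hsymm : ∀ a b, θ a b → θ b a) {x y : A} {l : List A}
    (hc : List.Chain (dep θ) x (l ++ [y])) :
    List.Chain (dep θ) y (l.reverse ++ [x]) := by
  have h1 : List.Chain' (dep θ) (x :: (l ++ [y])) := hc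
  have h2 : List.Chain' (flip (dep θ)) ((x :: (l ++ [y])).reverse) :=
    (List.isChain_reverse (R := flip (dep θ))).2 h1
  have h3 : List.Chain' (dep θ) ((x :: (l ++ [y])).reverse) :=
    h2.imp (fun a b hab => dep_symm hsymm hab)
  have h4 : (x :: (l ++ [y])).reverse = y :: (l.reverse ++ [x]) := by simp
  rw [h4] at h3
  exact h3

lemma DepPathB_symm (hsymm : ∀ a b, θ a b → θ b a) {B : Set A} {z z' : A}
    (h : DepPathB θ B z z') : DepPathB θ B z' z := by
  obtain ⟨l, hB, hc⟩ := h
  exact ⟨l.reverse, fun b hb => hB b (List.mem_reverse.1 hb), chain_rev hsymm hc⟩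

lemma DepPathB_extend (hsymm : ∀ a b, θ a b → θ b a) {B : Set A} {z c b : A}
    (h : DepPathB θ B z c) (hcB : c ∈ B) (hdep : dep θ c b) : DepPathB θ B z b := by
  obtain ⟨l, hB, hc⟩ := h
  refine ⟨l ++ [c], ?_, ?_⟩
  · intro x hx
    rcases List.mem_append.1 hx with hx | hx
    · exact hB x hx
    · rw [List.mem_singleton.1 hx]; exact hcB
  · rw [List.append_assoc]
    exact List.isChain_cons_split.2 ⟨hc, List.chain_cons.2 ⟨hdep, List.Chain.nil⟩⟩

lemma DepPathB_edge {B : Set A} {z b : A} (hdep : dep θ z b) : DepPathB θ B z b :=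
  ⟨[], fun x hx => absurd hx (List.not_mem_nil), List.chain_cons.2 ⟨hdep, List.Chain.nil⟩⟩

lemma DepPathB_glue_same (hsymm : ∀ a b, θ a b → θ b a) {B : Set A} {z z' b : A}
    (h1 : DepPathB θ B z b) (hb : b ∈ B) (h2 : DepPathB θ B z' b) : DepPathB θ B z z' := by
  obtain ⟨l₂, hB₂, hc₂⟩ := DepPathB_symm hsymm h2
  obtain ⟨l₁, hB₁, hc₁⟩ := h1
  refine ⟨l₁ ++ b :: l₂, ?_, ?_⟩
  · intro x hx
    rcases List.mem_append.1 hx with hx | hx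
    · exact hB₁ x hx
    · rcases List.mem_cons.1 hx with rfl | hx
      · exact hb
      · exact hB₂ x hx
  · have he : (l₁ ++ b :: l₂) ++ [z'] = l₁ ++ b :: (l₂ ++ [z']) := by simp
    rw [he]
    exact List.isChain_cons_split.2 ⟨hc₁, hc₂⟩

lemma DepPathB_glue (hsymm : ∀ a b, θ a b → θ b a) {B : Set A} {z z' b b' : A}
    (h1 : DepPathB θ B z b) (hb : b ∈ B) (hdep : dep θ b b')
    (h2 : DepPathB θ B z' b') (hb' : b' ∈ B) : DepPathB θ B z z' :=
  DepPathB_glue_same hsymm h1 hb (DepPathB_extend hsymm h2 hb' (dep_symm hsymm hdep))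

end Paths

section Beta
variable {A : Type*} {θ : A → A → Prop}

lemma IA_prefix (hanti : ∀ a, ¬ θ a a) (hsymm : ∀ a b, θ a b → θ b a) {z : A}
    {v₁ v₂ : List A} (hIA : IA θ (mkl θ (z :: (v₁ ++ v₂))) ⊆ {z}) :
    IA θ (mkl θ (z :: v₁)) ⊆ {z} := by
  intro a ha
  rw [mem_IA_iff hanti hsymm] at ha
  obtain ⟨u, w, hsplit, hu⟩ := ha
  apply hIA
  rw [mem_IA_iff hanti hsymm]
  refine ⟨u, w ++ v₂, ?_, hu⟩
  have := congrArg (· ++ v₂) hsplit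
  simpa using this

lemma connect (hanti : ∀ a, ¬ θ a a) (hsymm : ∀ a b, θ a b → θ b a) {B : Set A} {z : A}
    (hz : z ∉ B) :
    ∀ (v : List A), (∀ b ∈ v, b ∈ B) → (IA θ (mkl θ (z :: v)) ⊆ {z}) →
      ∀ b ∈ v, DepPathB θ B z b := by
  suffices H : ∀ n (v : List A), v.length ≤ n → (∀ b ∈ v, b ∈ B) →
      (IA θ (mkl θ (z :: v)) ⊆ {z}) → ∀ b ∈ v, DepPathB θ B z b by
    intro v; exact H v.length v le_rfl
  intro n
  induction n with
  | zero =>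
    intro v hlen _ _ b hb
    rw [List.length_eq_zero_iff.1 (Nat.le_zero.1 hlen)] at hb
    exact absurd hb (List.not_mem_nil)
  | succ n ih =>
    intro v hlen hvB hIA b hb
    obtain ⟨v₁, v₂, rfl, hnb⟩ := first_split hb
    have hbB : b ∈ B := hvB b hb
    have hex : ∃ c ∈ z :: v₁, ¬ θ b c := by
      by_contra hno
      push_neg at hno
      have hmem : b ∈ IA θ (mkl θ (z :: (v₁ ++ b :: v₂))) := by
        rw [mem_IA_iff hanti hsymm]
        exact ⟨z :: v₁, v₂, by simp, hno⟩
      have hbz : b = z := hIA hmem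
      exact hz (hbz ▸ hbB)
    obtain ⟨c, hc, hnθ⟩ := hex
    rcases List.mem_cons.1 hc with rfl | hcv₁
    · exact DepPathB_edge ⟨fun e => hz (e ▸ hbB), fun h => hnθ (hsymm _ _ h)⟩
    · have hcb : c ≠ b := fun e => hnb (e ▸ hcv₁)
      have hdep : dep θ c b := ⟨hcb, fun h => hnθ (hsymm _ _ h)⟩
      have hlen' : v₁.length ≤ n := by
        have h0 := hlen
        simp [List.length_append] at h0
        omega
      have hIH := ih v₁ hlen' (fun x hx => hvB x (List.mem_append.2 (Or.inl hx)))
        (IA_prefix hanti hsymm hIA) c hcv₁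
      exact DepPathB_extend hsymm hIH (hvB c (List.mem_append.2 (Or.inl hcv₁))) hdep

lemma beta_indep (hanti : ∀ a, ¬ θ a a) (hsymm : ∀ a b, θ a b → θ b a)
    {B : Set A} (hT : IsTFSA θ B)
    {z z' : A} (hz : z ∉ B) (hz' : z' ∉ B) {v v' : List A}
    (hv : ∀ b ∈ v, b ∈ B) (hv' : ∀ b ∈ v', b ∈ B)
    (hIA : IA θ (mkl θ (z :: v)) ⊆ {z}) (hIA' : IA θ (mkl θ (z' :: v')) ⊆ {z'})
    (hzz : θ z z') :
    ∀ a ∈ z :: v, ∀ a' ∈ z' :: v', θ a a' := by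
  have hP := connect hanti hsymm hz v hv hIA
  have hP' := connect hanti hsymm hz' v' hv' hIA'
  intro a ha a' ha'
  by_contra hn
  apply hT z z' hz hz' hzz
  rcases List.mem_cons.1 ha with rfl | hav <;> rcases List.mem_cons.1 ha' with rfl | hav'
  · exact absurd hzz hn
  · have hdep : dep θ a a' := ⟨fun e => hz (e ▸ hv' a' hav'), hn⟩
    exact DepPathB_glue_same hsymm (DepPathB_edge hdep) (hv' a' hav') (hP' a' hav')
  · have hdep : dep θ a a' := ⟨fun e => hz' (e ▸ hv a hav), hn⟩
    exact DepPathB_extend hsymm (hP a hav) (hv a hav) hdep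
  · by_cases hae : a = a'
    · subst hae
      exact DepPathB_glue_same hsymm (hP a hav) (hv a hav) (hP' a hav')
    · exact DepPathB_glue hsymm (hP a hav) (hv a hav) ⟨hae, hn⟩ (hP' a' hav') (hv' a' hav')

lemma subTr_rep {B : Set A} {w : Trace A θ} (hw : w ∈ subTr θ B) :
    ∃ l : List A, (∀ b ∈ l, b ∈ B) ∧ mkl θ l = w := by
  induction hw using Submonoid.closure_induction with
  | mem x hx =>
    obtain ⟨b, hb, rfl⟩ := hx
    exact ⟨[b], fun c hc => (List.mem_singleton.1 hc) ▸ hb, rfl⟩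
  | one => exact ⟨[], fun c hc => absurd hc (List.not_mem_nil), rfl⟩
  | mul x y hx hy ihx ihy =>
    obtain ⟨l₁, hl₁, rfl⟩ := ihx
    obtain ⟨l₂, hl₂, rfl⟩ := ihy
    refine ⟨l₁ ++ l₂, ?_, (mkl_append l₁ l₂).symm ▸ rfl⟩
    intro c hc
    rcases List.mem_append.1 hc with hc | hc
    · exact hl₁ c hc
    · exact hl₂ c hc

lemma beta_rep {B : Set A} {x : Trace A θ} (hx : x ∈ beta θ B) :
    ∃ z l, z ∉ B ∧ (∀ b ∈ l, b ∈ B) ∧ x = mkl θ (z :: l) ∧ IA θ x = {z} := by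
  obtain ⟨z, hz, w, hw, hxw, hIAx⟩ := hx
  obtain ⟨l, hl, rfl⟩ := subTr_rep hw
  exact ⟨z, l, hz, hl, hxw, hIAx⟩

end Beta

section Main
variable {A : Type*} {θ : A → A → Prop} {B : Set A}

noncomputable def zf (x : beta θ B) : A := (beta_rep x.2).choose

noncomputable def vf (x : beta θ B) : List A :=
  (beta_rep x.2).choose_spec.choose

lemma zvf_spec (x : beta θ B) :
    zf x ∉ B ∧ (∀ b ∈ vf x, b ∈ B) ∧ (x : Trace A θ) = mkl θ (zf x :: vf x) ∧
      IA θ (x : Trace A θ) = {zf x} :=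
  (beta_rep x.2).choose_spec.choose_spec

noncomputable def blockOf (x : beta θ B) : List A := zf x :: vf x

lemma blockOf_sub (x : beta θ B) : ∀ c ∈ blockOf x, c ∈ B ∨ c = zf x := by
  intro c hc
  rcases List.mem_cons.1 hc with rfl | hc
  · exact Or.inr rfl
  · exact Or.inl ((zvf_spec x).2.1 c hc)

lemma coe_eq_mkl_blockOf (x : beta θ B) : (x : Trace A θ) = mkl θ (blockOf x) :=
  (zvf_spec x).2.2.1

noncomputable def W (p : List (beta θ B)) : List A := (p.map blockOf).flatten

lemma W_nil : W ([] : List (beta θ B)) = [] := rfl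

lemma W_cons (x : beta θ B) (p : List (beta θ B)) : W (x :: p) = blockOf x ++ W p := rfl

lemma W_append (p₁ p₂ : List (beta θ B)) : W (p₁ ++ p₂) = W p₁ ++ W p₂ := by
  simp [W]

lemma mem_W {c : A} {p : List (beta θ B)} : c ∈ W p ↔ ∃ x ∈ p, c ∈ blockOf x := by
  simp only [W, List.mem_flatten, List.mem_map]
  constructor
  · rintro ⟨l, ⟨x, hx, rfl⟩, hc⟩; exact ⟨x, hx, hc⟩
  · rintro ⟨x, hx, hc⟩; exact ⟨blockOf x, ⟨x, hx, rfl⟩, hc⟩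

lemma W_split : ∀ (p : List (beta θ B)) {U V : List A} {a : A}, W p = U ++ a :: V →
    ∃ p₁ x p₂ u₁ u₂, p = p₁ ++ x :: p₂ ∧ blockOf x = u₁ ++ a :: u₂ ∧
      U = W p₁ ++ u₁ ∧ V = u₂ ++ W p₂
  | [], U, V, a, h => by
    exfalso
    rw [W_nil] at h
    cases U <;> simp_all
  | x :: p, U, V, a, h => by
    rw [W_cons] at h
    rcases List.append_eq_append_iff.1 h with ⟨a', hU, hW⟩ | ⟨c', hb, hAV⟩
    · obtain ⟨p₁, x', p₂, u₁, u₂, hp, hbl, hU', hV⟩ := W_split p hW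
      refine ⟨x :: p₁, x', p₂, u₁, u₂, by rw [hp, List.cons_append], hbl, ?_, hV⟩
      rw [hU, hU', W_cons, List.append_assoc]
    · cases c' with
      | nil =>
        rw [List.append_nil] at hb
        rw [List.nil_append] at hAV
        obtain ⟨p₁, x', p₂, u₁, u₂, hp, hbl, hU', hV⟩ := W_split p (hAV.symm ▸ rfl :
          W p = [] ++ a :: V)
        refine ⟨x :: p₁, x', p₂, u₁, u₂, by rw [hp, List.cons_append], hbl, ?_, hV⟩
        have h1 : W p₁ ++ u₁ = [] := hU'.symm
        rw [W_cons, List.append_assoc, h1, List.append_nil, hb]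
      | cons e c'' =>
        rw [List.cons_append] at hAV
        injection hAV with ha hV
        subst ha
        exact ⟨[], x, p, U, c'', rfl, hb, by simp [W_nil], hV⟩

lemma W_split_init (hanti : ∀ a, ¬ θ a a) (hsymm : ∀ a b, θ a b → θ b a)
    {p : List (beta θ B)} {U V : List A} {a : A}
    (h : W p = U ++ a :: V) (hind : ∀ c ∈ U, θ a c) :
    ∃ p₁ x p₂, p = p₁ ++ x :: p₂ ∧ a = zf x ∧ U = W p₁ ∧ V = vf x ++ W p₂ := by
  obtain ⟨p₁, x, p₂, u₁, u₂, hp, hbl, hU, hV⟩ := W_split p h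
  have hu₁ : ∀ c ∈ u₁, θ a c := fun c hc => hind c (hU ▸ List.mem_append.2 (Or.inr hc))
  have haIA : a ∈ IA θ (mkl θ (blockOf x)) := by
    rw [mem_IA_iff hanti hsymm]
    exact ⟨u₁, u₂, hbl, hu₁⟩
  have hax : a = zf x := by
    have h1 : IA θ (x : Trace A θ) = {zf x} := (zvf_spec x).2.2.2
    rw [coe_eq_mkl_blockOf] at h1
    rw [h1] at haIA
    exact haIA
  have hu₁nil : u₁ = [] := by
    cases hu₁' : u₁ with
    | nil => rfl
    | cons e w =>
      exfalso
      have : e = zf x := by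
        rw [hu₁'] at hbl
        unfold blockOf at hbl
        injection hbl with h1 h2
        exact h1.symm
      have hthe : θ a e := hu₁ e (hu₁' ▸ (List.mem_cons_self (a := e) (l := w)))
      rw [this, ← hax] at hthe
      exact hanti a hthe
  have hu₂ : u₂ = vf x := by
    rw [hu₁nil, List.nil_append, hax] at hbl
    unfold blockOf at hbl
    injection hbl with h1 h2
    exact h2.symm
  exact ⟨p₁, x, p₂, hp, hax, by rw [hU, hu₁nil, List.append_nil],
    by rw [hV, hu₂]⟩

lemma IA_W_sub (hanti : ∀ a, ¬ θ a a) (hsymm : ∀ a b, θ a b → θ b a)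
    {p : List (beta θ B)} {a : A} (ha : a ∈ IA θ (mkl θ (W p))) : a ∉ B := by
  rw [mem_IA_iff hanti hsymm] at ha
  obtain ⟨U, V, hUV, hind⟩ := ha
  obtain ⟨p₁, x, p₂, _, rfl, _, _⟩ := W_split_init hanti hsymm hUV hind
  exact (zvf_spec x).1

lemma Bprefix_unique (hanti : ∀ a, ¬ θ a a) (hsymm : ∀ a b, θ a b → θ b a) :
    ∀ n (lw lw' : List A) (p p' : List (beta θ B)),
    lw.length ≤ n → (∀ b ∈ lw, b ∈ B) → (∀ b ∈ lw', b ∈ B) →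
    mkl θ (lw ++ W p) = mkl θ (lw' ++ W p') → mkl θ lw = mkl θ lw' := by
  have base : ∀ (lw' : List A) (p p' : List (beta θ B)), (∀ b ∈ lw', b ∈ B) →
      mkl θ (W p) = mkl θ (lw' ++ W p') → mkl θ ([] : List A) = mkl θ lw' := by
    intro lw' p p' hB' heq
    cases lw' with
    | nil => rfl
    | cons c lt' =>
      exfalso
      have hc : c ∈ IA θ (mkl θ ((c :: lt') ++ W p')) := by
        rw [mem_IA_iff hanti hsymm]
        exact ⟨[], lt' ++ W p', by simp, by simp⟩
      rw [← heq] at hc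
      exact IA_W_sub hanti hsymm hc (hB' c (List.mem_cons_self))
  intro n
  induction n with
  | zero =>
    intro lw lw' p p' hlen hB hB' heq
    have h0 : lw = [] := List.length_eq_zero_iff.1 (Nat.le_zero.1 hlen)
    subst h0
    exact base lw' p p' hB' heq
  | succ n ih =>
    intro lw lw' p p' hlen hB hB' heq
    cases lw with
    | nil => exact base lw' p p' hB' heq
    | cons b lt =>
      have hbB : b ∈ B := hB b (List.mem_cons_self)
      have hbIA : b ∈ IA θ (mkl θ (lw' ++ W p')) := by
        rw [← heq, mem_IA_iff hanti hsymm]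
        exact ⟨[], lt ++ W p, by simp, by simp⟩
      rw [mem_IA_iff hanti hsymm] at hbIA
      obtain ⟨u, v, huv, hind⟩ := hbIA
      rcases List.append_eq_append_iff.1 huv with ⟨a', hu, hwp⟩ | ⟨c', hlw', hbv⟩
      · exfalso
        have hind' : ∀ c ∈ a', θ b c := fun c hc =>
          hind c (hu ▸ List.mem_append.2 (Or.inr hc))
        obtain ⟨p₁, x, p₂, _, hbz, _, _⟩ := W_split_init hanti hsymm hwp hind'
        exact (zvf_spec x).1 (hbz ▸ hbB)
      · cases c' with
        | nil =>
          exfalso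
          rw [List.append_nil] at hlw'
          rw [List.nil_append] at hbv
          obtain ⟨p₁, x, p₂, _, hbz, _, _⟩ :=
            W_split_init hanti hsymm (hbv.symm ▸ rfl : W p' = [] ++ b :: v)
              (by intro c hc; exact absurd hc (List.not_mem_nil))
          exact (zvf_spec x).1 (hbz ▸ hbB)
        | cons e c'' =>
          have hbe : b = e := by injection hbv
          subst hbe
          have hv : v = c'' ++ W p' := by injection hbv
          have hlwu : lw' = u ++ b :: c'' := hlw'
          have hshift : mkl θ lw' = mkl θ (b :: (u ++ c'')) := by
            rw [hlwu]; exact shift_s2 b u c'' hind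
          have huB : ∀ c ∈ u, c ∈ B := fun c hc =>
            hB' c (hlwu ▸ List.mem_append.2 (Or.inl hc))
          have hcB : ∀ c ∈ c'', c ∈ B := fun c hc =>
            hB' c (hlwu ▸ List.mem_append.2 (Or.inr (List.mem_cons_of_mem _ hc)))
          have heq2 : mkl θ ((b :: lt) ++ W p) = mkl θ ((b :: (u ++ c'')) ++ W p') := by
            rw [heq, mkl_append, mkl_append, hshift]
          have heq3 : trOf θ b * mkl θ (lt ++ W p) = trOf θ b * mkl θ ((u ++ c'') ++ W p') := by
            rw [← mkl_cons, ← mkl_cons]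
            have e1 : (b :: (lt ++ W p)) = (b :: lt) ++ W p := rfl
            have e2 : (b :: ((u ++ c'') ++ W p')) = (b :: (u ++ c'')) ++ W p' := rfl
            rw [e1, e2]
            exact heq2
          have heq4 := tr_left_cancel hanti hsymm heq3
          have hlen' : lt.length ≤ n := by
            simp at hlen
            omega
          have hIH := ih lt (u ++ c'') p p' hlen'
            (fun c hc => hB c (List.mem_cons_of_mem _ hc))
            (fun c hc => (List.mem_append.1 hc).elim (huB c) (hcB c)) heq4
          calc mkl θ (b :: lt) = trOf θ b * mkl θ lt := rfl
            _ = trOf θ b * mkl θ (u ++ c'') := by rw [hIH]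
            _ = mkl θ (b :: (u ++ c'')) := rfl
            _ = mkl θ lw' := hshift.symm
  
noncomputable def F (θ : A → A → Prop) (B : Set A) : FreeMonoid (beta θ B) →* Trace A θ :=
  FreeMonoid.lift (fun x => (x : Trace A θ))

lemma F_le (hanti : ∀ a, ¬ θ a a) (hsymm : ∀ a b, θ a b → θ b a) :
    traceCon (thetaX θ (beta θ B)) ≤ Con.ker (F θ B) := by
  apply Con.conGen_le.2
  rintro x y ⟨u, w, huw, rfl, rfl⟩
  show F θ B _ = F θ B _
  rw [map_mul, map_mul]
  show F θ B (FreeMonoid.of u) * F θ B (FreeMonoid.of w) =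
    F θ B (FreeMonoid.of w) * F θ B (FreeMonoid.of u)
  rw [show F θ B (FreeMonoid.of u) = (u : Trace A θ) from FreeMonoid.lift_eval_of _ _,
    show F θ B (FreeMonoid.of w) = (w : Trace A θ) from FreeMonoid.lift_eval_of _ _]
  rw [coe_eq_mkl_blockOf u, coe_eq_mkl_blockOf w, ← mkl_append, ← mkl_append]
  apply commute_lists
  intro b hb a ha
  have h1 : a ∈ Alph θ (u : Trace A θ) := by
    rw [coe_eq_mkl_blockOf u]; exact (mem_Alph_iff _ _).2 ha
  have h2 : b ∈ Alph θ (w : Trace A θ) := by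
    rw [coe_eq_mkl_blockOf w]; exact (mem_Alph_iff _ _).2 hb
  exact hsymm _ _ (huw a h1 b h2)

noncomputable def fhom (hanti : ∀ a, ¬ θ a a) (hsymm : ∀ a b, θ a b → θ b a) :
    Trace (beta θ B) (thetaX θ (beta θ B)) →* Trace A θ :=
  Con.lift _ (F θ B) (F_le hanti hsymm)

lemma fhom_of (hanti : ∀ a, ¬ θ a a) (hsymm : ∀ a b, θ a b → θ b a) (x : beta θ B) :
    fhom hanti hsymm (trOf (thetaX θ (beta θ B)) x) = (x : Trace A θ) := by
  show Con.lift _ _ _ (Con.mk' _ _) = _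
  rw [Con.lift_mk']
  exact FreeMonoid.lift_eval_of _ _

lemma fhom_mkl (hanti : ∀ a, ¬ θ a a) (hsymm : ∀ a b, θ a b → θ b a)
    (p : List (beta θ B)) :
    fhom hanti hsymm (mkl (thetaX θ (beta θ B)) p) = mkl θ (W p) := by
  induction p with
  | nil =>
    have h1 : mkl (thetaX θ (beta θ B)) [] = 1 := map_one _
    have h2 : mkl θ (W ([] : List (beta θ B))) = 1 := map_one _
    rw [h1, h2, map_one]
  | cons x p ih =>
    rw [W_cons, mkl_append, ← ih, mkl_cons, map_mul, fhom_of, coe_eq_mkl_blockOf]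

lemma main_induct (hanti : ∀ a, ¬ θ a a) (hsymm : ∀ a b, θ a b → θ b a)
    (hT : IsTFSA θ B) :
    ∀ n (q p : List (beta θ B)), q.length ≤ n →
      mkl θ (W q) = mkl θ (W p) →
      mkl (thetaX θ (beta θ B)) q = mkl (thetaX θ (beta θ B)) p := by
  have hPnil : ∀ p : List (beta θ B), mkl θ (W p) = mkl θ (W ([] : List (beta θ B))) →
      p = [] := by
    intro p hp
    cases p with
    | nil => rfl
    | cons x p' =>
      exfalso
      have hms := multiset_eq_of_mkl_eq hp
      rw [W_cons, W_nil] at hms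
      have : blockOf x ++ W p' = [] := by
        rw [show ((([] : List A) : Multiset A)) = 0 from rfl] at hms
        exact (Multiset.coe_eq_zero _).1 hms
      have : zf x :: (vf x ++ W p') = [] := by
        rw [← this]; rfl
      exact List.cons_ne_nil _ _ this
  intro n
  induction n with
  | zero =>
    intro q p hlen heq
    have hq : q = [] := List.length_eq_zero_iff.1 (Nat.le_zero.1 hlen)
    subst hq
    rw [hPnil p heq.symm]
  | succ n ih =>
    intro q p hlen heq
    cases q with
    | nil => rw [hPnil p heq.symm]
    | cons x q' =>
      have hWq : W (x :: q') = zf x :: (vf x ++ W q') := by rw [W_cons]; rfl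
      have haIA : zf x ∈ IA θ (mkl θ (W p)) := by
        rw [← heq, hWq, mem_IA_iff hanti hsymm]
        exact ⟨[], vf x ++ W q', rfl, by simp⟩
      rw [mem_IA_iff hanti hsymm] at haIA
      obtain ⟨U, V, hUV, hind⟩ := haIA
      obtain ⟨p₁, xi, p₂, hp, hax, hU, hV⟩ := W_split_init hanti hsymm hUV hind
      have hfull : ∀ y ∈ p₁, ∀ c ∈ blockOf y, ∀ c' ∈ blockOf xi, θ c c' := by
        intro y hy
        have hzyU : zf y ∈ U := by
          rw [hU]; exact mem_W.2 ⟨y, hy, List.mem_cons_self⟩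
        have hzy : θ (zf xi) (zf y) := hax ▸ hind (zf y) hzyU
        have hIAy : IA θ (mkl θ (zf y :: vf y)) ⊆ {zf y} := by
          have h1 := (zvf_spec y).2.2.2
          rw [coe_eq_mkl_blockOf y] at h1
          exact le_of_eq h1
        have hIAxi : IA θ (mkl θ (zf xi :: vf xi)) ⊆ {zf xi} := by
          have h1 := (zvf_spec xi).2.2.2
          rw [coe_eq_mkl_blockOf xi] at h1
          exact le_of_eq h1
        exact beta_indep hanti hsymm hT (zvf_spec y).1 (zvf_spec xi).1
          (zvf_spec y).2.1 (zvf_spec xi).2.1 hIAy hIAxi (hsymm _ _ hzy)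
      have hswap : ∀ b ∈ blockOf xi, ∀ a ∈ W p₁, θ b a := by
        intro b hb a ha
        obtain ⟨y, hy, hay⟩ := mem_W.1 ha
        exact hsymm _ _ (hfull y hy a hay b hb)
      have hcomm : mkl θ (W p) = mkl θ (blockOf xi ++ W (p₁ ++ p₂)) := by
        rw [hp, W_append, W_cons, W_append]
        calc mkl θ (W p₁ ++ (blockOf xi ++ W p₂))
            = mkl θ (W p₁ ++ blockOf xi) * mkl θ (W p₂) := by
              rw [← mkl_append, List.append_assoc]
          _ = mkl θ (blockOf xi ++ W p₁) * mkl θ (W p₂) := by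
              rw [commute_lists (W p₁) (blockOf xi) hswap]
          _ = mkl θ (blockOf xi ++ (W p₁ ++ W p₂)) := by
              rw [← mkl_append, List.append_assoc]
      have heq2 : mkl θ (zf x :: (vf x ++ W q')) = mkl θ (zf x :: (vf xi ++ W (p₁ ++ p₂))) := by
        rw [← hWq, heq, hcomm, hax]
        rfl
      have heq3 : mkl θ (vf x ++ W q') = mkl θ (vf xi ++ W (p₁ ++ p₂)) := by
        apply tr_left_cancel hanti hsymm (t := trOf θ (zf x))
        rw [← mkl_cons, ← mkl_cons]
        exact heq2
      have hvv : mkl θ (vf x) = mkl θ (vf xi) :=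
        Bprefix_unique hanti hsymm (vf x).length (vf x) (vf xi) q' (p₁ ++ p₂) le_rfl
          (zvf_spec x).2.1 (zvf_spec xi).2.1 heq3
      have hxxi : x = xi := by
        apply Subtype.coe_injective
        show (x : Trace A θ) = (xi : Trace A θ)
        rw [coe_eq_mkl_blockOf, coe_eq_mkl_blockOf]
        show mkl θ (zf x :: vf x) = mkl θ (zf xi :: vf xi)
        rw [mkl_cons, mkl_cons, hvv, hax]
      have heq4 : mkl θ (W q') = mkl θ (W (p₁ ++ p₂)) := by
        apply tr_left_cancel hanti hsymm (t := mkl θ (vf x))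
        rw [← mkl_append, hvv, ← mkl_append]
        exact heq3
      have hlen' : q'.length ≤ n := by simp at hlen; omega
      have hIH := ih q' (p₁ ++ p₂) hlen' heq4
      have hXswap : ∀ y ∈ p₁, thetaX θ (beta θ B) xi y := by
        intro y hy a ha b hb
        rw [coe_eq_mkl_blockOf xi] at ha
        rw [coe_eq_mkl_blockOf y] at hb
        exact hsymm _ _ (hfull y hy b ((mem_Alph_iff _ _).1 hb) a ((mem_Alph_iff _ _).1 ha))
      calc mkl (thetaX θ (beta θ B)) (x :: q')
          = trOf (thetaX θ (beta θ B)) x * mkl (thetaX θ (beta θ B)) q' := rfl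
        _ = trOf (thetaX θ (beta θ B)) x * mkl (thetaX θ (beta θ B)) (p₁ ++ p₂) := by
            rw [hIH]
        _ = mkl (thetaX θ (beta θ B)) (xi :: (p₁ ++ p₂)) := by rw [hxxi]; rfl
        _ = mkl (thetaX θ (beta θ B)) (p₁ ++ xi :: p₂) := (shift_s2 xi p₁ p₂ hXswap).symm
        _ = mkl (thetaX θ (beta θ B)) p := by rw [hp]

end Main
end PCM

open PCM in
/-- if no pair of independent letters of `Z` is joined by a dependence
path with inner vertices in `B`, then `⟨β_Z(B)⟩` is free partially commutative,
isomorphic to `M(β_Z(B), θ_{β_Z(B)})`. -/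
theorem stmt_2 {A : Type*} [Fintype A] (θ : A → A → Prop)
    (hanti : ∀ a, ¬ θ a a) (hsymm : ∀ a b, θ a b → θ b a) (B : Set A)
    (hT : IsTFSA θ B) :
    ∃ f : Trace (beta θ B) (thetaX θ (beta θ B)) →* Trace A θ,
      (∀ x : beta θ B, f (trOf (thetaX θ (beta θ B)) x) = (x : Trace A θ)) ∧
      Function.Injective f ∧
      MonoidHom.mrange f = Submonoid.closure (beta θ B) := by
  refine ⟨fhom hanti hsymm, fun x => fhom_of hanti hsymm x, ?_, ?_⟩
  · intro t₁ t₂ h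
    obtain ⟨q, rfl⟩ := mk_surj t₁
    obtain ⟨p, rfl⟩ := mk_surj t₂
    rw [fhom_mkl hanti hsymm, fhom_mkl hanti hsymm] at h
    exact main_induct hanti hsymm hT q.length q p le_rfl h
  · have hcomp : ∀ w : FreeMonoid (beta θ B),
        fhom hanti hsymm (trMk (thetaX θ (beta θ B)) w) = F θ B w := by
      intro w
      exact Con.lift_mk' _ _
    have hrange : Set.range (fun x : beta θ B => (x : Trace A θ)) = beta θ B :=
      Subtype.range_coe
    apply le_antisymm
    · intro t ht
      obtain ⟨s, rfl⟩ := MonoidHom.mem_mrange.1 ht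
      obtain ⟨w, rfl⟩ := Con.mk'_surjective s
      rw [show ((Con.mk' (traceCon (thetaX θ (beta θ B)))) w) =
        trMk (thetaX θ (beta θ B)) w from rfl, hcomp]
      have hm : F θ B w ∈ MonoidHom.mrange (F θ B) := ⟨w, rfl⟩
      rw [show F θ B = FreeMonoid.lift (fun x : beta θ B => (x : Trace A θ)) from rfl,
        FreeMonoid.mrange_lift, hrange] at hm
      exact hm
    · intro t ht
      have hm : t ∈ MonoidHom.mrange (F θ B) := by
        rw [show F θ B = FreeMonoid.lift (fun x : beta θ B => (x : Trace A θ)) from rfl,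
          FreeMonoid.mrange_lift, hrange]
        exact ht
      obtain ⟨w, rfl⟩ := MonoidHom.mem_mrange.1 hm
      exact MonoidHom.mem_mrange.2 ⟨trMk _ w, hcomp w⟩
end

section
/- In the trace monoid M({a,b,c}, θ) with θ = {(a,b),(b,a)} (i.e. only a and b commute, c commutes with nothing), taking B = {c} and Z = {a,b}, the elements a, b, ac, bc all belong to β_Z(B) and satisfy a·(bc) = b·(ac); hence β_Z(B) is not a partially commutative code and the right factor of the bisection M(A,θ) = M(B,θ_B)·T is not free partially commutative. -/
/-- The independence relation on `{a,b,c} = {0,1,2}` where only `a` and `b` commute. -/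
def theta5 : Fin 3 → Fin 3 → Prop := fun x y => (x = 0 ∧ y = 1) ∨ (x = 1 ∧ y = 0)

namespace PCM
variable {A : Type*}

def liftTr (θ : A → A → Prop) {M : Type*} [Monoid M] (f : A → M)
    (h : ∀ a b, θ a b → f a * f b = f b * f a) : Trace A θ →* M :=
  Con.lift _ (FreeMonoid.lift f) (by
    refine (Con.conGen_le (r := TraceRel θ)).mpr ?_
    rintro x y ⟨a, b, hab, rfl, rfl⟩
    rw [Con.ker_rel]
    simp only [map_mul, FreeMonoid.lift_eval_of]
    exact h a b hab)

@[simp] lemma liftTr_of (θ : A → A → Prop) {M : Type*} [Monoid M] (f : A → M)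
    (h : ∀ a b, θ a b → f a * f b = f b * f a) (a : A) :
    liftTr θ f h (trOf θ a) = f a := by
  exact (Con.lift_mk' _ (FreeMonoid.of a)).trans (FreeMonoid.lift_eval_of _ _)

def msTr (θ : A → A → Prop) : Trace A θ →* Multiplicative (Multiset A) :=
  liftTr θ (fun a => Multiplicative.ofAdd {a}) (fun _ _ _ => mul_comm _ _)

@[simp] lemma msTr_of (θ : A → A → Prop) (a : A) :
    msTr θ (trOf θ a) = Multiplicative.ofAdd {a} := liftTr_of _ _ _ _

/-- projection killing letter 1 -/
def projA : Trace (Fin 3) theta5 →* FreeMonoid (Fin 3) :=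
  liftTr theta5 (fun a => if a = 1 then 1 else FreeMonoid.of a) (by
    rintro a b (⟨rfl, rfl⟩ | ⟨rfl, rfl⟩) <;> simp)

/-- projection killing letter 0 -/
def projB : Trace (Fin 3) theta5 →* FreeMonoid (Fin 3) :=
  liftTr theta5 (fun a => if a = 0 then 1 else FreeMonoid.of a) (by
    rintro a b (⟨rfl, rfl⟩ | ⟨rfl, rfl⟩) <;> simp)

lemma ms_first {θ : A → A → Prop} {t : Trace A θ} {z : A} {w : Trace A θ}
    (h : t = trOf θ z * w) : z ∈ (msTr θ t).toAdd := by
  subst h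
  simp [map_mul]

end PCM

open PCM

lemma IA_a : IA theta5 (trOf theta5 0) = {0} := by
  ext z
  simp only [IA, Set.mem_setOf_eq, Set.mem_singleton_iff]
  constructor
  · rintro ⟨w, hw⟩
    have := ms_first hw
    simp at this
    omega
  · rintro rfl; exact ⟨1, (mul_one _).symm⟩


lemma IA_ac : IA theta5 (trOf theta5 0 * trOf theta5 2) = {0} := by
  ext z
  simp only [IA, Set.mem_setOf_eq, Set.mem_singleton_iff]
  constructor
  · rintro ⟨w, hw⟩
    have h1 := ms_first hw
    simp [map_mul] at h1
    rcases h1 with rfl | rfl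
    · rfl
    · exfalso
      have h2 := congrArg projA hw
      simp only [map_mul, projA, liftTr_of] at h2
      have h3 := congrArg FreeMonoid.toList h2
      simp [FreeMonoid.toList_of] at h3
  · rintro rfl; exact ⟨trOf theta5 2, rfl⟩

lemma IA_bc : IA theta5 (trOf theta5 1 * trOf theta5 2) = {1} := by
  ext z
  simp only [IA, Set.mem_setOf_eq, Set.mem_singleton_iff]
  constructor
  · rintro ⟨w, hw⟩
    have h1 := ms_first hw
    simp [map_mul] at h1
    rcases h1 with rfl | rfl
    · rfl
    · exfalso
      have h2 := congrArg projB hw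
      simp only [map_mul, projB, liftTr_of] at h2
      have h3 := congrArg FreeMonoid.toList h2
      simp [FreeMonoid.toList_of] at h3
  · rintro rfl; exact ⟨trOf theta5 2, rfl⟩

lemma IA_b : IA theta5 (trOf theta5 1) = {1} := by
  ext z
  simp only [IA, Set.mem_setOf_eq, Set.mem_singleton_iff]
  constructor
  · rintro ⟨w, hw⟩
    have := ms_first hw
    simp at this
    omega
  · rintro rfl; exact ⟨1, (mul_one _).symm⟩

lemma c_mem : trOf theta5 2 ∈ subTr theta5 ({2} : Set (Fin 3)) :=
  Submonoid.subset_closure ⟨2, rfl, rfl⟩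

lemma comm_ab : trOf theta5 0 * trOf theta5 1 = trOf theta5 1 * trOf theta5 0 := by
  have : (traceCon theta5) (.of 0 * .of 1) (.of 1 * .of 0) :=
    ConGen.Rel.of _ _ ⟨0, 1, Or.inl ⟨rfl, rfl⟩, rfl, rfl⟩
  have h := (Con.eq (traceCon theta5)).mpr this
  simpa [trOf, trMk, map_mul] using h


open PCM in
/-- with `θ : a-b`, `B = {c}`, the elements `a, b, ac, bc` lie in
`β_Z(B)` and `a·(bc) = b·(ac)`, so `β_Z(B)` is not a partially commutative code. -/
theorem stmt_5 :
    trOf theta5 0 ∈ beta theta5 {2} ∧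
    trOf theta5 1 ∈ beta theta5 {2} ∧
    trOf theta5 0 * trOf theta5 2 ∈ beta theta5 {2} ∧
    trOf theta5 1 * trOf theta5 2 ∈ beta theta5 {2} ∧
    trOf theta5 0 * (trOf theta5 1 * trOf theta5 2) =
      trOf theta5 1 * (trOf theta5 0 * trOf theta5 2) ∧
    ¬ IsPCCode theta5 (beta theta5 {2}) := by
  have h1 : trOf theta5 0 ∈ beta theta5 {2} :=
    ⟨0, by simp, 1, one_mem _, (mul_one _).symm, IA_a⟩
  have h2 : trOf theta5 1 ∈ beta theta5 {2} :=
    ⟨1, by simp, 1, one_mem _, (mul_one _).symm, IA_b⟩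
  have h3 : trOf theta5 0 * trOf theta5 2 ∈ beta theta5 {2} :=
    ⟨0, by simp, trOf theta5 2, c_mem, rfl, IA_ac⟩
  have h4 : trOf theta5 1 * trOf theta5 2 ∈ beta theta5 {2} :=
    ⟨1, by simp, trOf theta5 2, c_mem, rfl, IA_bc⟩
  have heq : trOf theta5 0 * (trOf theta5 1 * trOf theta5 2) =
      trOf theta5 1 * (trOf theta5 0 * trOf theta5 2) := by
    rw [← mul_assoc, ← mul_assoc, comm_ab]
  refine ⟨h1, h2, h3, h4, heq, ?_⟩
  rintro ⟨f, hf, hinj⟩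
  set X := beta theta5 ({2} : Set (Fin 3)) with hX
  set xa : X := ⟨_, h1⟩
  set xb : X := ⟨_, h2⟩
  set xac : X := ⟨_, h3⟩
  set xbc : X := ⟨_, h4⟩
  have key : trOf (thetaX theta5 X) xa * trOf (thetaX theta5 X) xbc =
      trOf (thetaX theta5 X) xb * trOf (thetaX theta5 X) xac := by
    apply hinj
    rw [map_mul, map_mul, hf, hf, hf, hf]
    exact heq
  have hms := congrArg (fun t => (msTr (thetaX theta5 X) t).toAdd) key
  simp only [map_mul, msTr_of, toAdd_mul, toAdd_ofAdd] at hms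
  have hmem : xa ∈ ({xb} + {xac} : Multiset X) := by
    rw [← hms]; simp
  simp only [Multiset.singleton_add, Multiset.mem_cons, Multiset.mem_singleton] at hmem
  rcases hmem with h | h
  · have : trOf theta5 0 = trOf theta5 1 := congrArg Subtype.val h
    have := congrArg (fun t => (msTr theta5 t).toAdd) this
    simp at this
  · have : trOf theta5 0 = trOf theta5 0 * trOf theta5 2 := congrArg Subtype.val h
    have := congrArg (fun t => (msTr theta5 t).toAdd) this
    simp [map_mul] at this
end

section
/- Let M be a monoid and (M₁, M₂) a bisection of M (i.e. the multiplication map M₁ × M₂ → M is bijective). Then M₁ is left-unitary in the following sense: for all u, v ∈ M, if u ∈ M₁ and u·v ∈ M₁, then v ∈ M₁. -/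
/-- the left factor of a bisection is left-unitary. -/
theorem stmt_6 {M : Type*} [Monoid M] (M₁ M₂ : Submonoid M)
    (h : Function.Bijective fun p : M₁ × M₂ => (p.1 : M) * (p.2 : M)) :
    ∀ u v : M, u ∈ M₁ → u * v ∈ M₁ → v ∈ M₁ := by
  intro u v hu huv
  obtain ⟨⟨v₁, v₂⟩, hv⟩ := h.2 v
  simp only at hv
  have key : ((⟨⟨u, hu⟩ * v₁, v₂⟩ : M₁ × M₂)) = (⟨⟨u * v, huv⟩, 1⟩ : M₁ × M₂) := by
    apply h.1
    simp [← hv, mul_assoc]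
  have h2 : v₂ = 1 := (Prod.ext_iff.mp key).2
  have h1 : (v₁ : M) = v := by
    rw [h2] at hv; simpa using hv
  rw [← h1]; exact v₁.2
end

section
/- The submonoid 2ℤ of the additive monoid ℤ satisfies the condition (u ∈ 2ℤ and u + v ∈ 2ℤ) ⟹ v ∈ 2ℤ, but there exists no submonoid T of ℤ such that (2ℤ, T) is a bisection of ℤ, i.e. such that the addition map 2ℤ × T → ℤ is bijective. -/
/-- `2ℤ` is left-unitary in `ℤ` but is the left factor of no
bisection of the additive monoid `ℤ`. -/
theorem stmt_7 (E : AddSubmonoid ℤ) (hE : (E : Set ℤ) = {n : ℤ | 2 ∣ n}) :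
    (∀ u v : ℤ, u ∈ E → u + v ∈ E → v ∈ E) ∧
    ¬ ∃ T : AddSubmonoid ℤ,
        Function.Bijective fun p : E × T => (p.1 : ℤ) + (p.2 : ℤ) := by
  have hmem : ∀ n : ℤ, n ∈ E ↔ 2 ∣ n := fun n => by
    rw [← SetLike.mem_coe, hE]; rfl
  constructor
  · intro u v hu huv
    rw [hmem] at *
    omega
  · rintro ⟨T, hinj, hsurj⟩
    obtain ⟨⟨e, t⟩, hp⟩ := hsurj 1
    simp only at hp
    have he : 2 ∣ (e : ℤ) := (hmem _).1 e.2
    have ht : ¬ 2 ∣ (t : ℤ) := by obtain ⟨k, hk⟩ := he; omega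
    have h2t : ((t : ℤ) + t) ∈ E := (hmem _).2 (by omega)
    have h2tT : ((t : ℤ) + t) ∈ T := add_mem t.2 t.2
    have := hinj (a₁ := (⟨⟨_, h2t⟩, 0⟩ : E × T)) (a₂ := ⟨0, ⟨_, h2tT⟩⟩) (by simp)
    have : ((t : ℤ) + t) = 0 := congrArg (fun p : E × T => (p.1 : ℤ)) this
    omega
end

section
/- Let A be an alphabet, θ an independence relation, B ⊆ A a transitively factorizing subalphabet (no path in the dependence graph between two θ-independent letters of Z = A − B with all inner vertices in B), and z, z' ∈ Z with (z,z') ∈ θ. Then every element of β_z(B) commutes elementwise with every element of β_{z'}(B): for all u ∈ β_z(B), v ∈ β_{z'}(B), Alph(u) × Alph(v) ⊆ θ, hence uv = vu in M(A,θ). -/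
namespace Stmt9Aux

open PCM FreeMonoid List

variable {A : Type*} {θ : A → A → Prop}

/-- Homomorphism counting letters. -/
def toMs : FreeMonoid A →* Multiplicative (Multiset A) :=
  FreeMonoid.lift (fun a => Multiplicative.ofAdd {a})

lemma toMs_ofList (l : List A) :
    toMs (ofList l) = Multiplicative.ofAdd (l : Multiset A) := by
  induction l with
  | nil => rfl
  | cons h t ih =>
    rw [ofList_cons, map_mul, ih]
    show Multiplicative.ofAdd ({h} : Multiset A) * _ = _
    rw [← ofAdd_add]
    simp [Multiset.singleton_add]

lemma con_toMs {x y : FreeMonoid A} (h : traceCon θ x y) : toMs x = toMs y := by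
  have hle : traceCon θ ≤ Con.ker toMs := by
    refine Con.conGen_le.mpr ?_
    rintro x y ⟨a, b, hab, rfl, rfl⟩
    show toMs _ = toMs _
    simp only [map_mul]
    exact mul_comm _ _
  exact hle h

lemma trMk_eq_iff {x y : FreeMonoid A} :
    trMk θ x = trMk θ y ↔ traceCon θ x y := Con.eq _

lemma mem_of_trMk_eq {l l' : List A}
    (h : trMk θ (ofList l) = trMk θ (ofList l')) : ∀ x, x ∈ l ↔ x ∈ l' := by
  have h2 := con_toMs (trMk_eq_iff.mp h)
  rw [toMs_ofList, toMs_ofList] at h2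
  have h3 : (l : Multiset A) = l' := Multiplicative.ofAdd.injective h2
  exact fun x => (Multiset.coe_eq_coe.mp h3).mem_iff

lemma mem_alph (l : List A) {a : A} (ha : a ∈ l) :
    a ∈ Alph θ (trMk θ (ofList l)) := ⟨l, rfl, ha⟩

lemma traceRel_of {a b : A} (h : θ a b) :
    traceCon θ (FreeMonoid.of a * FreeMonoid.of b) (FreeMonoid.of b * FreeMonoid.of a) :=
  ConGen.Rel.of _ _ ⟨a, b, h, rfl, rfl⟩

lemma con_push {h : A} {m : List A} (hc : ∀ p ∈ m, θ h p) :
    traceCon θ (FreeMonoid.of h * ofList m) (ofList m * FreeMonoid.of h) := by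
  induction m with
  | nil =>
    rw [ofList_nil, mul_one, one_mul]
    exact (traceCon θ).refl _
  | cons p t ih =>
    rw [ofList_cons]
    have h1 : traceCon θ (FreeMonoid.of h * (FreeMonoid.of p * ofList t))
        (FreeMonoid.of p * (FreeMonoid.of h * ofList t)) := by
      rw [← mul_assoc, ← mul_assoc]
      exact (traceCon θ).mul (traceRel_of (hc p (List.mem_cons_self))) ((traceCon θ).refl _)
    refine (traceCon θ).trans h1 ?_
    rw [mul_assoc]
    exact (traceCon θ).mul ((traceCon θ).refl _)
      (ih fun q hq => hc q (List.mem_cons_of_mem _ hq))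

lemma con_swap {l1 l2 : List A} (hc : ∀ p ∈ l1, ∀ q ∈ l2, θ p q) :
    traceCon θ (ofList (l1 ++ l2)) (ofList (l2 ++ l1)) := by
  induction l1 with
  | nil =>
    rw [List.nil_append, List.append_nil]
    exact (traceCon θ).refl _
  | cons h t ih =>
    rw [List.cons_append, ofList_cons]
    have h1 : traceCon θ (FreeMonoid.of h * ofList (t ++ l2))
        (FreeMonoid.of h * (ofList l2 * ofList t)) := by
      have := ih (fun p hp => hc p (List.mem_cons_of_mem _ hp))
      rw [ofList_append] at this
      exact (traceCon θ).mul ((traceCon θ).refl _) this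
    refine (traceCon θ).trans h1 ?_
    rw [← mul_assoc]
    have h2 : traceCon θ (FreeMonoid.of h * ofList l2) (ofList l2 * FreeMonoid.of h) :=
      con_push (fun q hq => hc h (List.mem_cons_self) q hq)
    refine (traceCon θ).trans ((traceCon θ).mul h2 ((traceCon θ).refl _)) ?_
    rw [mul_assoc, ofList_append, ofList_cons]
    exact (traceCon θ).refl _

lemma con_split (S : A → Bool) (l : List A)
    (hc : ∀ p ∈ l, ∀ q ∈ l, S p = true → S q = false → θ p q) :
    traceCon θ (ofList l)
      (ofList (l.filter (fun a => !S a)) * ofList (l.filter S)) := by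
  induction l with
  | nil =>
    simp only [List.filter_nil, ofList_nil, mul_one]
    exact (traceCon θ).refl _
  | cons h t ih =>
    have ih' := ih (fun p hp q hq => hc p (List.mem_cons_of_mem _ hp) q (List.mem_cons_of_mem _ hq))
    rw [ofList_cons]
    cases hS : S h with
    | false =>
      rw [List.filter_cons_of_pos (by simp [hS]), List.filter_cons_of_neg (by simp [hS]),
        ofList_cons, mul_assoc]
      exact (traceCon θ).mul ((traceCon θ).refl _) ih'
    | true =>
      rw [List.filter_cons_of_neg (by simp [hS]), List.filter_cons_of_pos (by simp [hS]),
        ofList_cons]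
      refine (traceCon θ).trans ((traceCon θ).mul ((traceCon θ).refl _) ih') ?_
      rw [← mul_assoc]
      have h2 : traceCon θ (FreeMonoid.of h * ofList (t.filter fun a => !S a))
          (ofList (t.filter fun a => !S a) * FreeMonoid.of h) := by
        refine con_push ?_
        intro p hp
        rw [List.mem_filter] at hp
        exact hc h (List.mem_cons_self) p (List.mem_cons_of_mem _ hp.1) hS (by simpa using hp.2)
      refine (traceCon θ).trans ((traceCon θ).mul h2 ((traceCon θ).refl _)) ?_
      rw [mul_assoc]
      exact (traceCon θ).refl _

/-- Letters reachable from `z` through `B`. -/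
def Pset (θ : A → A → Prop) (B : Set A) (z : A) : Set A :=
  {a | a = z ∨ (a ∈ B ∧ DepPathB θ B z a)}

lemma Pset_closed {B : Set A} {z p q : A} (hp : p ∈ Pset θ B z) (hqB : q ∈ B)
    (hd : dep θ p q) : q ∈ Pset θ B z := by
  rcases hp with rfl | ⟨hpB, l, hlB, hch⟩
  · exact Or.inr ⟨hqB, [], by simp, List.isChain_pair.mpr hd⟩
  · refine Or.inr ⟨hqB, l ++ [p], ?_, ?_⟩
    · intro b hb
      rcases List.mem_append.mp hb with h | h
      · exact hlB b h
      · rw [List.mem_singleton.mp h]; exact hpB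
    · rw [List.append_assoc, List.singleton_append]; unfold List.Chain; rw [List.isChain_cons_split]
      exact ⟨hch, List.isChain_pair.mpr hd⟩

lemma chain_rev {z' b : A} {m : List A} (hsymm : ∀ a b, θ a b → θ b a)
    (h : List.Chain (dep θ) z' (m ++ [b])) :
    List.Chain (dep θ) b (m.reverse ++ [z']) := by
  have h1 : List.Chain' (dep θ) (z' :: (m ++ [b])) := h
  have h2 : List.Chain' (dep θ) (List.reverse (z' :: (m ++ [b]))) := by
    unfold List.Chain'; rw [List.isChain_reverse]
    exact List.IsChain.imp (fun a c hac => ⟨hac.1.symm, fun ht => hac.2 (hsymm _ _ ht)⟩) h1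
  have h3 : List.reverse (z' :: (m ++ [b])) = b :: (m.reverse ++ [z']) := by
    simp
  rw [h3] at h2
  exact h2

lemma pset_theta {B : Set A} {z z' a b : A}
    (hanti : ∀ a, ¬ θ a a) (hsymm : ∀ a b, θ a b → θ b a)
    (hT : IsTFSA θ B) (hz : z ∉ B) (hz' : z' ∉ B) (hθ : θ z z')
    (ha : a ∈ Pset θ B z) (hb : b ∈ Pset θ B z') : θ a b := by
  by_contra hnθ
  refine hT z z' hz hz' hθ ?_
  rcases ha with h1 | ⟨haB, l, hlB, hl⟩
  · subst h1
    rcases hb with h2 | ⟨hbB, m, hmB, hm⟩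
    · subst h2; exact absurd hθ hnθ
    · -- a = z, path z' → b
      have hne : a ≠ b := fun h => hz (h ▸ hbB)
      have hd : dep θ a b := ⟨hne, hnθ⟩
      refine ⟨b :: m.reverse, ?_, ?_⟩
      · intro x hx
        rcases List.mem_cons.mp hx with rfl | hx
        · exact hbB
        · exact hmB x (List.mem_reverse.mp hx)
      · rw [List.cons_append]; unfold List.Chain; rw [List.isChain_cons_cons]
        exact ⟨hd, chain_rev hsymm hm⟩
  · rcases hb with h2 | ⟨hbB, m, hmB, hm⟩
    · subst h2
      -- b = z', path z → a
      have hne : a ≠ b := fun h => hz' (h ▸ haB)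
      have hd : dep θ a b := ⟨hne, hnθ⟩
      refine ⟨l ++ [a], ?_, ?_⟩
      · intro x hx
        rcases List.mem_append.mp hx with h | h
        · exact hlB x h
        · rw [List.mem_singleton.mp h]; exact haB
      · rw [List.append_assoc, List.singleton_append]; unfold List.Chain; rw [List.isChain_cons_split]
        exact ⟨hl, List.isChain_pair.mpr hd⟩
    · have hm' := chain_rev hsymm hm
      by_cases hab : a = b
      · subst hab
        refine ⟨l ++ a :: m.reverse, ?_, ?_⟩
        · intro x hx
          rcases List.mem_append.mp hx with h | h
          · exact hlB x h
          · rcases List.mem_cons.mp h with rfl | h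
            · exact haB
            · exact hmB x (List.mem_reverse.mp h)
        · rw [List.append_assoc, List.cons_append]; unfold List.Chain; rw [List.isChain_cons_split]
          exact ⟨hl, hm'⟩
      · have hd : dep θ a b := ⟨hab, hnθ⟩
        refine ⟨l ++ a :: b :: m.reverse, ?_, ?_⟩
        · intro x hx
          rcases List.mem_append.mp hx with h | h
          · exact hlB x h
          · rcases List.mem_cons.mp h with rfl | h
            · exact haB
            · rcases List.mem_cons.mp h with rfl | h
              · exact hbB
              · exact hmB x (List.mem_reverse.mp h)
        · rw [List.append_assoc, List.cons_append, List.cons_append]; unfold List.Chain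
          rw [List.isChain_cons_split, List.isChain_cons_cons]
          exact ⟨hl, hd, hm'⟩

lemma alph_sub {B : Set A} {z : A} {lw : List A} (hlwB : ∀ b ∈ lw, b ∈ B)
    (hIA : IA θ (trMk θ (ofList (z :: lw))) = {z}) :
    Alph θ (trMk θ (ofList (z :: lw))) ⊆ Pset θ B z := by
  classical
  intro a ha
  by_contra hP
  obtain ⟨l, hl, hal⟩ := ha
  have hmem : ∀ x, x ∈ l ↔ x ∈ z :: lw := mem_of_trMk_eq hl
  set S : A → Bool := fun x => decide (x ∈ Pset θ B z) with hSdef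
  have hScon : ∀ p ∈ l, ∀ q ∈ l, S p = true → S q = false → θ p q := by
    intro p hp q hq hSp hSq
    have hpP : p ∈ Pset θ B z := by simpa [hSdef] using hSp
    have hqP : q ∉ Pset θ B z := by simpa [hSdef] using hSq
    by_contra hnθ
    have hqz : q ≠ z := fun h => hqP (h ▸ Or.inl rfl)
    have hqB : q ∈ B := by
      rcases List.mem_cons.mp ((hmem q).mp hq) with h | h
      · exact absurd h hqz
      · exact hlwB q h
    have hpq : p ≠ q := fun h => hqP (h ▸ hpP)
    exact hqP (Pset_closed hpP hqB ⟨hpq, hnθ⟩)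
  have hcon := con_split S l hScon
  have haf : a ∈ l.filter (fun x => !S x) := by
    rw [List.mem_filter]
    exact ⟨hal, by simp [hSdef, hP]⟩
  obtain ⟨h, t, hht⟩ : ∃ h t, l.filter (fun x => !S x) = h :: t := by
    cases hft : l.filter (fun x => !S x) with
    | nil => rw [hft] at haf; exact absurd haf List.not_mem_nil
    | cons h t => exact ⟨h, t, rfl⟩
  have hu : trMk θ (ofList (z :: lw)) =
      trMk θ (FreeMonoid.of h * (ofList t * ofList (l.filter S))) := by
    rw [← hl, trMk_eq_iff]
    have h2 := hcon
    rw [hht, ofList_cons, mul_assoc] at h2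
    exact h2
  have hhIA : h ∈ IA θ (trMk θ (ofList (z :: lw))) :=
    ⟨trMk θ (ofList t * ofList (l.filter S)), by rw [hu, map_mul]; rfl⟩
  rw [hIA] at hhIA
  have hhS : S h = false := by
    have : h ∈ l.filter (fun x => !S x) := by rw [hht]; exact List.mem_cons_self
    rw [List.mem_filter] at this
    simpa using this.2
  rw [Set.mem_singleton_iff.mp hhIA] at hhS
  simp only [hSdef, decide_eq_false_iff_not] at hhS
  exact hhS (Or.inl rfl)

lemma subTr_list {B : Set A} {w : Trace A θ} (hw : w ∈ subTr θ B) :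
    ∃ l : List A, (∀ b ∈ l, b ∈ B) ∧ trMk θ (ofList l) = w := by
  induction hw using Submonoid.closure_induction with
  | mem x hx =>
    obtain ⟨b, hb, rfl⟩ := hx
    exact ⟨[b], by simpa using hb, rfl⟩
  | one => exact ⟨[], by simp, rfl⟩
  | mul x y _ _ ihx ihy =>
    obtain ⟨lx, hlx, hx⟩ := ihx
    obtain ⟨ly, hly, hy⟩ := ihy
    refine ⟨lx ++ ly, ?_, ?_⟩
    · intro b hb
      rcases List.mem_append.mp hb with h | h
      · exact hlx b h
      · exact hly b h
    · rw [ofList_append, map_mul, hx, hy]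

end Stmt9Aux


open PCM in
/-- for a TFSA `B` and independent `z, z' ∈ Z`, every element of
`β_z(B)` commutes letterwise with every element of `β_{z'}(B)`. -/
theorem stmt_9 {A : Type*} (θ : A → A → Prop)
    (hanti : ∀ a, ¬ θ a a) (hsymm : ∀ a b, θ a b → θ b a) (B : Set A)
    (hT : IsTFSA θ B) (z z' : A) (hz : z ∉ B) (hz' : z' ∉ B) (hθ : θ z z')
    (u v : Trace A θ)
    (hu : ∃ w ∈ subTr θ B, u = trOf θ z * w ∧ IA θ u = {z})
    (hv : ∃ w ∈ subTr θ B, v = trOf θ z' * w ∧ IA θ v = {z'}) :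
    (∀ a ∈ Alph θ u, ∀ b ∈ Alph θ v, θ a b) ∧ u * v = v * u := by
  classical
  obtain ⟨w, hw, hue, hIAu⟩ := hu
  obtain ⟨w', hw', hve, hIAv⟩ := hv
  obtain ⟨lw, hlwB, hlw⟩ := Stmt9Aux.subTr_list hw
  obtain ⟨lw', hlwB', hlw'⟩ := Stmt9Aux.subTr_list hw'
  have hu2 : u = trMk θ (FreeMonoid.ofList (z :: lw)) := by
    rw [hue, ← hlw, FreeMonoid.ofList_cons, map_mul]; rfl
  have hv2 : v = trMk θ (FreeMonoid.ofList (z' :: lw')) := by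
    rw [hve, ← hlw', FreeMonoid.ofList_cons, map_mul]; rfl
  have hAu : Alph θ u ⊆ Stmt9Aux.Pset θ B z := by
    rw [hu2]
    exact Stmt9Aux.alph_sub hlwB (hu2 ▸ hIAu)
  have hAv : Alph θ v ⊆ Stmt9Aux.Pset θ B z' := by
    rw [hv2]
    exact Stmt9Aux.alph_sub hlwB' (hv2 ▸ hIAv)
  have h1 : ∀ a ∈ Alph θ u, ∀ b ∈ Alph θ v, θ a b := fun a ha b hb =>
    Stmt9Aux.pset_theta hanti hsymm hT hz hz' hθ (hAu ha) (hAv hb)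
  refine ⟨h1, ?_⟩
  rw [hu2, hv2]
  have e1 : trMk θ (FreeMonoid.ofList (z :: lw)) * trMk θ (FreeMonoid.ofList (z' :: lw')) =
      trMk θ (FreeMonoid.ofList ((z :: lw) ++ (z' :: lw'))) := by
    rw [FreeMonoid.ofList_append, map_mul]
  have e2 : trMk θ (FreeMonoid.ofList (z' :: lw')) * trMk θ (FreeMonoid.ofList (z :: lw)) =
      trMk θ (FreeMonoid.ofList ((z' :: lw') ++ (z :: lw))) := by
    rw [FreeMonoid.ofList_append, map_mul]
  rw [e1, e2, Stmt9Aux.trMk_eq_iff]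
  refine Stmt9Aux.con_swap ?_
  intro p hp q hq
  refine h1 p ?_ q ?_
  · rw [hu2]; exact Stmt9Aux.mem_alph _ hp
  · rw [hv2]; exact Stmt9Aux.mem_alph _ hq
end

section
/- Let K be a commutative ring, A an alphabet, θ an independence relation, (B, Z) a partition of A. Let L_K(A,θ) be the free partially commutative Lie algebra, realized as L_K(A)/I_θ where I_θ is the Lie ideal generated by the brackets [a,b] for (a,b) ∈ θ. Then L_K(A,θ) decomposes as a direct sum of K-modules L_K(A,θ) = L_K(B,θ_B) ⊕ J, where J is the Lie ideal generated by the elements τ_Z(B) = {[…[[z,b₁],b₂],…,bₙ] : z·b₁⋯bₙ ∈ β_Z(B)}. -/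
namespace PCM

variable (K : Type*) [CommRing K] {A : Type*}

/-- The set of brackets `[a,b]` for `(a,b) ∈ θ` in the free Lie algebra. -/
def lieRels (θ : A → A → Prop) : Set (FreeLieAlgebra K A) :=
  {x | ∃ a b, θ a b ∧ x = ⁅FreeLieAlgebra.of K a, FreeLieAlgebra.of K b⁆}

/-- The Lie ideal `I_θ`. -/
noncomputable def Itheta (θ : A → A → Prop) : LieIdeal K (FreeLieAlgebra K A) :=
  LieSubmodule.lieSpan K (FreeLieAlgebra K A) (lieRels K θ)

/-- The free partially commutative Lie algebra `L_K(A,θ) = L_K(A)/I_θ`. -/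
abbrev PCLie (θ : A → A → Prop) := FreeLieAlgebra K A ⧸ Itheta K θ

/-- The image of a letter in `L_K(A,θ)`. -/
noncomputable def lett (θ : A → A → Prop) (a : A) : PCLie K θ :=
  LieSubmodule.Quotient.mk' (Itheta K θ) (FreeLieAlgebra.of K a)

/-- The left-normed bracket `[…[[z,b₁],b₂],…,bₙ]` in `L_K(A,θ)`. -/
noncomputable def brkt (θ : A → A → Prop) (z : A) (bs : List A) : PCLie K θ :=
  bs.foldl (fun y b => ⁅y, lett K θ b⁆) (lett K θ z)

/-- The set `τ_Z(B)` of Lazard elements. -/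
def tauSet (θ : A → A → Prop) (B : Set A) : Set (PCLie K θ) :=
  {x | ∃ z, z ∉ B ∧ ∃ bs : List A, (∀ b ∈ bs, b ∈ B) ∧
    trMk θ (FreeMonoid.ofList (z :: bs)) ∈ beta θ B ∧ x = brkt K θ z bs}

end PCM

namespace PCM

section Aux

variable {A : Type*} (θ : A → A → Prop)

open scoped Classical

/-- The multiset-of-letters invariant of traces. -/
noncomputable def multHom : Trace A θ →* Multiplicative (Multiset A) :=
  Con.lift _ (FreeMonoid.lift fun a => Multiplicative.ofAdd ({a} : Multiset A))
    (Con.conGen_le.mpr (by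
      rintro x y ⟨a, b, hab, rfl, rfl⟩
      show FreeMonoid.lift _ _ = FreeMonoid.lift _ _
      simp only [map_mul, FreeMonoid.lift_eval_of]
      exact mul_comm _ _))

lemma multHom_trOf (a : A) :
    multHom θ (trOf θ a) = Multiplicative.ofAdd ({a} : Multiset A) := by
  simp [multHom, trOf, trMk, Con.lift_mk', Con.lift_coe, FreeMonoid.lift_eval_of]
  exact FreeMonoid.lift_eval_of (fun b : A => Multiplicative.ofAdd ({b} : Multiset A)) a

lemma IA_single (z : A) : IA θ (trOf θ z) = {z} := by
  ext a
  constructor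
  · rintro ⟨w, hw⟩
    have h := congrArg (fun t => (multHom θ t).toAdd) hw
    simp only [map_mul, multHom_trOf, toAdd_mul, toAdd_ofAdd] at h
    have ha : a ∈ ({z} : Multiset A) := by
      rw [h]; exact Multiset.mem_add.mpr (Or.inl (Multiset.mem_singleton_self a))
    exact Multiset.mem_singleton.mp ha
  · rintro rfl
    exact ⟨1, (mul_one _).symm⟩

variable (K : Type*) [CommRing K] (B : Set A)

/-- The auxiliary lift on the free Lie algebra killing letters outside `B`. -/
noncomputable def piAux : FreeLieAlgebra K A →ₗ⁅K⁆ PCLie K θ :=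
  FreeLieAlgebra.lift K fun a => if a ∈ B then lett K θ a else 0

lemma piAux_of (a : A) :
    piAux θ K B (FreeLieAlgebra.of K a) = if a ∈ B then lett K θ a else 0 :=
  FreeLieAlgebra.lift_of_apply _ a

lemma lett_bracket_eq_zero {a b : A} (hab : θ a b) :
    (⁅lett K θ a, lett K θ b⁆ : PCLie K θ) = 0 := by
  have h : (⁅FreeLieAlgebra.of K a, FreeLieAlgebra.of K b⁆ : FreeLieAlgebra K A)
      ∈ Itheta K θ := LieSubmodule.subset_lieSpan ⟨a, b, hab, rfl⟩
  show (⁅LieSubmodule.Quotient.mk (N := Itheta K θ) (FreeLieAlgebra.of K a),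
      LieSubmodule.Quotient.mk (N := Itheta K θ) (FreeLieAlgebra.of K b)⁆ : PCLie K θ) = 0
  rw [← LieSubmodule.Quotient.mk_bracket]
  exact (LieSubmodule.Quotient.mk_eq_zero' ).mpr h

lemma Itheta_le_ker_piAux : Itheta K θ ≤ (piAux θ K B).ker := by
  refine LieSubmodule.lieSpan_le.mpr ?_
  rintro x ⟨a, b, hab, rfl⟩
  rw [SetLike.mem_coe, LieHom.mem_ker, LieHom.map_lie, piAux_of, piAux_of]
  by_cases ha : a ∈ B <;> by_cases hb : b ∈ B <;>
    simp only [ha, hb, if_true, if_false, zero_lie, lie_zero]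
  exact lett_bracket_eq_zero θ K hab

/-- The retraction `π : L_K(A,θ) → L_K(A,θ)` fixing `B`-letters, killing the rest. -/
noncomputable def piHom : PCLie K θ →ₗ⁅K⁆ PCLie K θ :=
  { (Itheta K θ).toSubmodule.liftQ (piAux θ K B).toLinearMap
      (id (α := (Itheta K θ).toSubmodule ≤ LinearMap.ker (piAux θ K B).toLinearMap) fun x hx => LieHom.mem_ker.mp (Itheta_le_ker_piAux θ K B hx)) with
    map_lie' := by
      rintro ⟨x⟩ ⟨y⟩
      show ((Itheta K θ).toSubmodule.liftQ _ _)
          ⁅(LieSubmodule.Quotient.mk x : PCLie K θ), LieSubmodule.Quotient.mk y⁆ = _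
      rw [← LieSubmodule.Quotient.mk_bracket]
      show ((Itheta K θ).toSubmodule.liftQ _ _) (Submodule.Quotient.mk _) =
        ⁅((Itheta K θ).toSubmodule.liftQ _ _) (Submodule.Quotient.mk _),
          ((Itheta K θ).toSubmodule.liftQ _ _) (Submodule.Quotient.mk _)⁆
      simp only [Submodule.liftQ_apply, LieHom.coe_toLinearMap, LieHom.map_lie] }

lemma piHom_lett (a : A) :
    piHom θ K B (lett K θ a) = if a ∈ B then lett K θ a else 0 := by
  show ((Itheta K θ).toSubmodule.liftQ _ _) (Submodule.Quotient.mk _) = _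
  rw [Submodule.liftQ_apply]
  exact piAux_of θ K B a

lemma free_gen (y : FreeLieAlgebra K A) :
    y ∈ LieSubalgebra.lieSpan K (FreeLieAlgebra K A)
      (Set.range (FreeLieAlgebra.of K)) := by
  set S := LieSubalgebra.lieSpan K (FreeLieAlgebra K A) (Set.range (FreeLieAlgebra.of K))
  let G : FreeLieAlgebra K A →ₗ⁅K⁆ S :=
    FreeLieAlgebra.lift K fun a =>
      (⟨FreeLieAlgebra.of K a, LieSubalgebra.subset_lieSpan ⟨a, rfl⟩⟩ : S)
  have h : S.incl.comp G = LieHom.id := by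
    apply FreeLieAlgebra.hom_ext
    intro a
    show S.incl (G (FreeLieAlgebra.of K a)) = FreeLieAlgebra.of K a
    rw [show G (FreeLieAlgebra.of K a) = _ from FreeLieAlgebra.lift_of_apply _ a]
    rfl
  have : S.incl (G y) = y := by
    have := LieHom.congr_fun h y
    simpa using this
  rw [← this]
  exact (G y).2

lemma pclie_gen (x : PCLie K θ) :
    x ∈ LieSubalgebra.lieSpan K (PCLie K θ) (Set.range (lett K θ)) := by
  obtain ⟨y, rfl⟩ := LieSubmodule.Quotient.surjective_mk' (Itheta K θ) x
  refine LieSubalgebra.lieSpan_induction K (hx := free_gen K y)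
    (p := fun z _ => LieSubmodule.Quotient.mk' (Itheta K θ) z ∈
      LieSubalgebra.lieSpan K (PCLie K θ) (Set.range (lett K θ)))
    ?_ ?_ ?_ ?_ ?_
  · rintro _ ⟨a, rfl⟩
    exact LieSubalgebra.subset_lieSpan ⟨a, rfl⟩
  · simpa using (LieSubalgebra.lieSpan K (PCLie K θ) (Set.range (lett K θ))).zero_mem
  · intro z w _ _ hz hw
    rw [map_add]
    exact add_mem hz hw
  · intro r z _ hz
    rw [map_smul]
    exact Submodule.smul_mem _ r hz
  · intro z w _ _ hz hw
    have : LieSubmodule.Quotient.mk' (Itheta K θ) ⁅z, w⁆ =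
        ⁅LieSubmodule.Quotient.mk' (Itheta K θ) z,
          LieSubmodule.Quotient.mk' (Itheta K θ) w⁆ :=
      LieSubmodule.Quotient.mk_bracket (I := Itheta K θ) z w
    rw [this]
    exact LieSubalgebra.lie_mem _ hz hw

lemma lett_mem_tau {z : A} (hz : z ∉ B) : lett K θ z ∈ tauSet K θ B := by
  refine ⟨z, hz, [], by simp, ?_, rfl⟩
  refine ⟨z, hz, 1, one_mem _, ?_, ?_⟩
  · rw [mul_one]; rfl
  · show IA θ (trMk θ (FreeMonoid.ofList [z])) = {z}
    have : trMk θ (FreeMonoid.ofList [z]) = trOf θ z := rfl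
    rw [this, IA_single]

lemma piHom_foldl_zero (bs : List A) (y : PCLie K θ) (hy : piHom θ K B y = 0) :
    piHom θ K B (bs.foldl (fun y b => ⁅y, lett K θ b⁆) y) = 0 := by
  induction bs generalizing y with
  | nil => exact hy
  | cons b bs ih =>
    refine ih _ ?_
    rw [LieHom.map_lie, hy, zero_lie]

lemma tau_le_ker : LieSubmodule.lieSpan K (PCLie K θ) (tauSet K θ B) ≤
    (piHom θ K B).ker := by
  refine LieSubmodule.lieSpan_le.mpr ?_
  rintro x ⟨z, hz, bs, hbs, hbeta, rfl⟩
  rw [SetLike.mem_coe, LieHom.mem_ker]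
  refine piHom_foldl_zero θ K B bs _ ?_
  rw [piHom_lett, if_neg hz]

lemma piHom_fix {x : PCLie K θ}
    (hx : x ∈ LieSubalgebra.lieSpan K (PCLie K θ) (lett K θ '' B)) :
    piHom θ K B x = x := by
  refine LieSubalgebra.lieSpan_induction K (hx := hx) (p := fun x _ => piHom θ K B x = x)
    ?_ (map_zero _) ?_ ?_ ?_
  · rintro _ ⟨a, ha, rfl⟩
    rw [piHom_lett, if_pos ha]
  · intro x y _ _ hx hy; rw [map_add, hx, hy]
  · intro r x _ hx; rw [map_smul, hx]
  · intro x y _ _ hx hy; rw [LieHom.map_lie, hx, hy]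

lemma piHom_decomp (x : PCLie K θ) :
    piHom θ K B x ∈ LieSubalgebra.lieSpan K (PCLie K θ) (lett K θ '' B) ∧
    x - piHom θ K B x ∈ LieSubmodule.lieSpan K (PCLie K θ) (tauSet K θ B) := by
  set S := LieSubalgebra.lieSpan K (PCLie K θ) (lett K θ '' B)
  set J := LieSubmodule.lieSpan K (PCLie K θ) (tauSet K θ B)
  refine LieSubalgebra.lieSpan_induction K (hx := pclie_gen θ K x)
    (p := fun x _ => piHom θ K B x ∈ S ∧ x - piHom θ K B x ∈ J) ?_ ?_ ?_ ?_ ?_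
  · rintro _ ⟨a, rfl⟩
    by_cases ha : a ∈ B
    · rw [piHom_lett, if_pos ha]
      exact ⟨LieSubalgebra.subset_lieSpan ⟨a, ha, rfl⟩, by simpa using J.zero_mem⟩
    · rw [piHom_lett, if_neg ha]
      refine ⟨S.zero_mem, ?_⟩
      rw [sub_zero]
      exact LieSubmodule.subset_lieSpan (lett_mem_tau θ K B ha)
  · refine ⟨?_, ?_⟩
    · rw [map_zero]; exact S.zero_mem
    · rw [map_zero, sub_zero]; exact J.zero_mem
  · rintro x y _ _ ⟨hx1, hx2⟩ ⟨hy1, hy2⟩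
    rw [map_add]
    refine ⟨add_mem hx1 hy1, ?_⟩
    have : x + y - (piHom θ K B x + piHom θ K B y) =
        (x - piHom θ K B x) + (y - piHom θ K B y) := by abel
    rw [this]
    exact J.add_mem hx2 hy2
  · rintro r x _ ⟨h1, h2⟩
    rw [map_smul]
    refine ⟨Submodule.smul_mem _ r h1, ?_⟩
    have : r • x - r • piHom θ K B x = r • (x - piHom θ K B x) := by
      rw [smul_sub]
    rw [this]
    exact J.smul_mem r h2
  · rintro x y _ _ ⟨hx1, hx2⟩ ⟨hy1, hy2⟩
    rw [LieHom.map_lie]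
    refine ⟨S.lie_mem hx1 hy1, ?_⟩
    have key : ⁅x, y⁆ - ⁅piHom θ K B x, piHom θ K B y⁆ =
        ⁅x - piHom θ K B x, y⁆ + ⁅piHom θ K B x, y - piHom θ K B y⁆ := by
      rw [sub_lie, lie_sub]; abel
    rw [key]
    refine J.add_mem ?_ (J.lie_mem hy2)
    rw [show ⁅x - piHom θ K B x, y⁆ = -⁅y, x - piHom θ K B x⁆ from (lie_skew _ _).symm]
    exact J.neg_mem (J.lie_mem hx2)

end Aux

end PCM

open PCM in
/-- `L_K(A,θ) = L_K(B,θ_B) ⊕ J` as `K`-modules, where `J` is the Lie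
ideal generated by `τ_Z(B)`. -/
theorem stmt_10 {K : Type*} [CommRing K] {A : Type*} (θ : A → A → Prop)
    (hanti : ∀ a, ¬ θ a a) (hsymm : ∀ a b, θ a b → θ b a) (B : Set A) :
    IsCompl
      (LieSubalgebra.lieSpan K (PCLie K θ) (lett K θ '' B)).toSubmodule
      (LieSubmodule.lieSpan K (PCLie K θ) (tauSet K θ B) :
        LieIdeal K (PCLie K θ)).toSubmodule := by
  rw [isCompl_iff]
  constructor
  · rw [Submodule.disjoint_def]
    intro x hxS hxJ
    have h1 : piHom θ K B x = x := piHom_fix θ K B hxS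
    have h2 : piHom θ K B x = 0 :=
      LieHom.mem_ker.mp (tau_le_ker θ K B hxJ)
    rw [h1] at h2
    exact h2
  · rw [codisjoint_iff, eq_top_iff]
    intro x _
    obtain ⟨h1, h2⟩ := piHom_decomp θ K B x
    exact Submodule.mem_sup.mpr ⟨piHom θ K B x, h1, x - piHom θ K B x, h2,
      add_sub_cancel _ _⟩
end
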